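/- arXiv:1406.1851 — 7 statements merged into one kernel-verified Lean document; each statement's English description precedes it below -/
import Mathlib

section
/- Let a_1, ..., a_m ∈ ℤ[y, y⁻¹] satisfy a_1 · a_2 · ... · a_m = (−1)^{m₂} and a_1 + a_2 + ... + a_m = m₁·y − m₂·y⁻¹, where m₁, m₂ are positive integers with m₁ + m₂ = m. Then, up to a permutation of the indices, a_i = y for i = 1, ..., m₁ and a_i = −y⁻¹ for i = m₁+1, ..., m; equivalently, the multiset {a_1, ..., a_m} consists of m₁ copies of y and m₂ copies of −y⁻¹. -/
/-!
Each `a i` divides the unit `(-1) ^ m₂`, so it is a unit `± T n`. The functional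
`f ↦ f.coeff 1 - f.coeff (-1)` is at most `1` on such units, with equality exactly at `T 1` and
`-T (-1)`; on the sum it takes the value `m₁ + m₂`, the number of summands, so equality holds at
every `a i`. Comparing coefficients of `T 1` then shows that exactly `m₁` of them equal `T 1`.
-/

open LaurentPolynomial

theorem Equiv.Perm.exists_forall_iff_of_natCard_eq {ι : Type*} [Finite ι] {p q : ι → Prop}
    (h : Nat.card {i // p i} = Nat.card {i // q i}) :
    ∃ σ : Equiv.Perm ι, ∀ i, q (σ i) ↔ p i := by
  classical
  obtain ⟨e⟩ := Finite.card_eq.mp h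
  exact ⟨e.extendSubtype, fun i => ⟨fun hq => by_contra fun hp =>
    e.extendSubtype_not_mem i hp hq, e.extendSubtype_mem i⟩⟩

namespace LaurentPolynomial

theorem exists_C_mul_T_of_isUnit {R : Type*} [CommRing R] [IsDomain R] {f : R[T;T⁻¹]}
    (hf : IsUnit f) : ∃ u n, IsUnit u ∧ f = C u * T n := by
  obtain ⟨n, p, hp⟩ := f.exists_T_pow
  obtain ⟨g, hg⟩ := hf.exists_right_inv
  obtain ⟨k, q, hq⟩ := g.exists_T_pow
  have hpq : p * q = Polynomial.X ^ (n + k) := by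
    apply Polynomial.toLaurent_injective
    rw [map_mul, hp, hq, Polynomial.toLaurent_X_pow, Nat.cast_add, T_add,
      mul_mul_mul_comm, hg, one_mul]
  obtain ⟨i, -, hi⟩ := (dvd_prime_pow Polynomial.prime_X _).mp (Dvd.intro q hpq)
  obtain ⟨v, rfl⟩ := hi.symm
  obtain ⟨u, hu, hvu⟩ := Polynomial.isUnit_iff.mp v.isUnit
  refine ⟨u, i - n, hu, ?_⟩
  calc f = f * T n * T (-n) := by rw [mul_T_assoc, add_neg_cancel, T_zero, mul_one]
    _ = C u * T (i - n) := by
      rw [← hp, ← hvu, map_mul, Polynomial.toLaurent_X_pow, Polynomial.toLaurent_C,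
        mul_comm (T _), mul_assoc, ← T_add, sub_eq_add_neg]

theorem exists_eq_T_or_eq_neg_T_of_isUnit {f : ℤ[T;T⁻¹]} (hf : IsUnit f) :
    ∃ n, f = T n ∨ f = -T n := by
  obtain ⟨u, n, hu, rfl⟩ := exists_C_mul_T_of_isUnit hf
  rcases Int.isUnit_iff.mp hu with rfl | rfl
  · exact ⟨n, .inl (by rw [map_one, one_mul])⟩
  · exact ⟨n, .inr (by rw [map_neg, map_one, neg_one_mul])⟩

theorem coeff_one_sub_coeff_neg_one_le_of_isUnit {f : ℤ[T;T⁻¹]} (hf : IsUnit f) :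
    f.coeff 1 - f.coeff (-1) ≤ 1 := by
  obtain ⟨n, rfl | rfl⟩ := exists_eq_T_or_eq_neg_T_of_isUnit hf <;>
    simp only [T_apply, AddMonoidAlgebra.coeff_neg, Finsupp.neg_apply] <;> split_ifs <;> omega

theorem eq_T_one_or_eq_neg_T_neg_one_of_isUnit {f : ℤ[T;T⁻¹]} (hf : IsUnit f)
    (h : f.coeff 1 - f.coeff (-1) = 1) : f = T 1 ∨ f = -T (-1) := by
  obtain ⟨n, rfl | rfl⟩ := exists_eq_T_or_eq_neg_T_of_isUnit hf
  · have hn : n = 1 := by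
      simp only [T_apply] at h
      split_ifs at h <;> omega
    exact .inl (hn ▸ rfl)
  · have hn : n = -1 := by
      simp only [T_apply, AddMonoidAlgebra.coeff_neg, Finsupp.neg_apply] at h
      split_ifs at h <;> omega
    exact .inr (hn ▸ rfl)

section SumOfUnits

variable {ι : Type*} [Fintype ι] {a : ι → ℤ[T;T⁻¹]} {m₁ m₂ : ℕ}

theorem sum_coeff_eq_of_sum_eq
    (hsum : ∑ i, a i = (m₁ : ℤ[T;T⁻¹]) * T 1 - (m₂ : ℤ[T;T⁻¹]) * T (-1)) (t : ℤ) :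
    ∑ i, (a i).coeff t = (if 1 = t then (m₁ : ℤ) else 0) - if -1 = t then (m₂ : ℤ) else 0 := by
  rw [← Finsupp.finsetSum_apply, ← AddMonoidAlgebra.coeff_sum, hsum]
  simp [← nsmul_eq_mul]

theorem eq_T_one_or_eq_neg_T_neg_one_of_sum_eq (hι : Fintype.card ι = m₁ + m₂)
    (hunit : ∀ i, IsUnit (a i))
    (hsum : ∑ i, a i = (m₁ : ℤ[T;T⁻¹]) * T 1 - (m₂ : ℤ[T;T⁻¹]) * T (-1)) (i : ι) :
    a i = T 1 ∨ a i = -T (-1) := by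
  have htotal : ∑ i, ((a i).coeff 1 - (a i).coeff (-1)) = ∑ _i : ι, 1 := by
    rw [Finset.sum_sub_distrib, sum_coeff_eq_of_sum_eq hsum, sum_coeff_eq_of_sum_eq hsum]
    simp [hι]
  refine eq_T_one_or_eq_neg_T_neg_one_of_isUnit (hunit i) ?_
  exact (Finset.sum_eq_sum_iff_of_le fun i _ => coeff_one_sub_coeff_neg_one_le_of_isUnit
    (hunit i)).mp htotal i (Finset.mem_univ i)

theorem natCard_eq_T_one_of_sum_eq (hval : ∀ i, a i = T 1 ∨ a i = -T (-1))
    (hsum : ∑ i, a i = (m₁ : ℤ[T;T⁻¹]) * T 1 - (m₂ : ℤ[T;T⁻¹]) * T (-1)) :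
    Nat.card {i // a i = T 1} = m₁ := by
  classical
  have hT : (-T (-1) : ℤ[T;T⁻¹]) ≠ T 1 := fun h => by simpa using congr_arg (·.coeff 1) h
  rw [Nat.card_eq_fintype_card, Fintype.card_subtype, ← Nat.cast_inj (R := ℤ)]
  calc ((Finset.univ.filter fun i => a i = T 1).card : ℤ)
      = ∑ i, if a i = T 1 then 1 else 0 := (Finset.sum_boole _ _).symm
    _ = ∑ i, (a i).coeff 1 :=
        Finset.sum_congr rfl fun i _ => by rcases hval i with h | h <;> simp [h, hT]
    _ = m₁ := by simp [sum_coeff_eq_of_sum_eq hsum]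

end SumOfUnits

end LaurentPolynomial

theorem stmt6_general (m₁ m₂ : ℕ)
    (a : Fin (m₁ + m₂) → LaurentPolynomial ℤ)
    (hprod : ∏ i, a i = (-1) ^ m₂)
    (hsum : ∑ i, a i =
      (m₁ : LaurentPolynomial ℤ) * T 1 - (m₂ : LaurentPolynomial ℤ) * T (-1)) :
    ∃ σ : Equiv.Perm (Fin (m₁ + m₂)), ∀ i : Fin (m₁ + m₂),
      a (σ i) = if (i : ℕ) < m₁ then T 1 else -T (-1) := by
  have hunit (i) : IsUnit (a i) :=
    isUnit_of_dvd_unit (Finset.dvd_prod_of_mem a (Finset.mem_univ i))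
      (hprod ▸ isUnit_one.neg.pow m₂)
  have hval := eq_T_one_or_eq_neg_T_neg_one_of_sum_eq (Fintype.card_fin _) hunit hsum
  have hcard : Nat.card {i : Fin (m₁ + m₂) // i < m₁} = Nat.card {i // a i = T 1} := by
    rw [natCard_eq_T_one_of_sum_eq hval hsum, Nat.card_eq_fintype_card,
      Fintype.card_fin_lt_of_le le_self_add]
  obtain ⟨σ, hσ⟩ := Equiv.Perm.exists_forall_iff_of_natCard_eq hcard
  refine ⟨σ, fun i => ?_⟩
  split_ifs with h
  · exact (hσ i).mpr h
  · exact (hval (σ i)).resolve_left ((hσ i).not.mpr h)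

/-- If Laurent polynomials `a_1, …, a_m ∈ ℤ[y, y⁻¹]` (with `m = m₁ + m₂`,
`m₁, m₂ > 0`) satisfy `a_1 ⋯ a_m = (-1)^{m₂}` and
`a_1 + ⋯ + a_m = m₁·y - m₂·y⁻¹`, then up to a permutation of the indices,
`a_i = y` for `i ≤ m₁` and `a_i = -y⁻¹` otherwise. -/
theorem stmt6 (m₁ m₂ : ℕ) (h₁ : 0 < m₁) (h₂ : 0 < m₂)
    (a : Fin (m₁ + m₂) → LaurentPolynomial ℤ)
    (hprod : ∏ i, a i = (-1) ^ m₂)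
    (hsum : ∑ i, a i =
      (m₁ : LaurentPolynomial ℤ) * T 1 - (m₂ : LaurentPolynomial ℤ) * T (-1)) :
    ∃ σ : Equiv.Perm (Fin (m₁ + m₂)), ∀ i : Fin (m₁ + m₂),
      a (σ i) = if (i : ℕ) < m₁ then T 1 else -T (-1) :=
  stmt6_general m₁ m₂ a hprod hsum
end

section
/- Under the stated hypotheses, S is invertible and S − S⁻¹ = (a⁻¹ − a)·(ξ·ξᵀ − I), where ξ·ξᵀ denotes the l×l matrix whose (i, j) entry is ξ_i ξ_j and I is the l×l identity matrix. -/
/-!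
Conjugation by the orthogonal matrix `T` reduces everything to the diagonal `Λ`:
`S - S⁻¹ = T (Λ - Λ⁻¹) Tᵀ`. Both `a` and `-a⁻¹` are roots of `λ - λ⁻¹ = a - a⁻¹`, so
`Λ - Λ⁻¹` differs from `(a - a⁻¹) I` only in its last entry. As `c` is a simple eigenvalue,
`η = Tᵀ ξ` is supported on the last coordinate, where `η² = Σ ξᵢ²`; the normalisation of `ξ`
is exactly what makes the last entry `c - c⁻¹` agree with `(a - a⁻¹)(1 - η²)`.
-/

open Matrix

section OrthogonalConjugation

variable {K n : Type*} [Field K] [Fintype n] [DecidableEq n] {T : Matrix n n K}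

lemma conj_diagonal_mul_conj_diagonal_inv (hT : T * Tᵀ = 1) {d : n → K} (hd : ∀ i, d i ≠ 0) :
    T * diagonal d * Tᵀ * (T * diagonal d⁻¹ * Tᵀ) = 1 := by
  have hdd : diagonal d * diagonal d⁻¹ = 1 := by
    rw [diagonal_mul_diagonal, ← diagonal_one]
    exact congrArg diagonal (funext fun i => mul_inv_cancel₀ (hd i))
  calc T * diagonal d * Tᵀ * (T * diagonal d⁻¹ * Tᵀ)
      = T * diagonal d * (Tᵀ * T) * diagonal d⁻¹ * Tᵀ := by simp only [Matrix.mul_assoc]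
    _ = 1 := by
      rw [mul_eq_one_comm.mp hT, Matrix.mul_one, Matrix.mul_assoc T, hdd, Matrix.mul_one, hT]

lemma conj_diagonal_sub_inv (hT : T * Tᵀ = 1) {d : n → K} (hd : ∀ i, d i ≠ 0) :
    T * diagonal d * Tᵀ - (T * diagonal d * Tᵀ)⁻¹ = T * diagonal (d - d⁻¹) * Tᵀ := by
  rw [inv_eq_right_inv (conj_diagonal_mul_conj_diagonal_inv hT hd), ← Matrix.sub_mul,
    ← Matrix.mul_sub, diagonal_sub]
  rfl

lemma transpose_mulVec_apply_eq_zero (hT : T * Tᵀ = 1) {d ξ : n → K} {c : K}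
    (hξ : (T * diagonal d * Tᵀ) *ᵥ ξ = c • ξ) {i : n} (hi : d i ≠ c) : (Tᵀ *ᵥ ξ) i = 0 := by
  have hη : diagonal d *ᵥ (Tᵀ *ᵥ ξ) = c • (Tᵀ *ᵥ ξ) := by
    rw [← mulVec_smul, ← hξ, mulVec_mulVec, mulVec_mulVec, ← Matrix.mul_assoc, ← Matrix.mul_assoc,
      mul_eq_one_comm.mp hT, Matrix.one_mul]
  have hi' := congrFun hη i
  rw [mulVec_diagonal, Pi.smul_apply, smul_eq_mul] at hi'
  exact (mul_eq_zero.mp (by linear_combination hi' : (d i - c) * (Tᵀ *ᵥ ξ) i = 0)).resolve_left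
    (sub_ne_zero.mpr hi)

lemma transpose_mulVec_dotProduct_self (hT : T * Tᵀ = 1) (ξ : n → K) :
    (Tᵀ *ᵥ ξ) ⬝ᵥ (Tᵀ *ᵥ ξ) = ξ ⬝ᵥ ξ := by
  rw [dotProduct_mulVec, vecMul_transpose, mulVec_mulVec, hT, one_mulVec, dotProduct_comm]

end OrthogonalConjugation

lemma diagonal_sub_inv_eq_smul_one_sub_vecMulVec {K n : Type*} [Field K] [Fintype n]
    [DecidableEq n] {d η : n → K} {k : n} {s : K} (hs : ∀ i ≠ k, d i - (d i)⁻¹ = s) (hη : ∀ i ≠ k, η i = 0)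
    (hk : d k - (d k)⁻¹ = s * (1 - η k ^ 2)) :
    diagonal (d - d⁻¹) = s • (1 - vecMulVec η η) := by
  ext i j
  obtain rfl | hij := eq_or_ne i j
  · obtain rfl | hi := eq_or_ne i k
    · simp [vecMulVec_apply, hk, sq]
    · simp [vecMulVec_apply, hs i hi, hη i hi]
  · have hηij : η i * η j = 0 := by
      obtain rfl | hi := eq_or_ne i k
      · rw [hη j hij.symm, mul_zero]
      · rw [hη i hi, zero_mul]
    simp [diagonal_apply_ne _ hij, one_apply_ne hij, vecMulVec_apply, hηij]

section Spectrum

variable {K : Type*} [Field K] {a c : K} (m n : ℕ)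

/-- The diagonal of `Λ` for `l = n + 1`. -/
def lambdaDiag (a c : K) : Fin (n + 1) → K :=
  fun i => if (i : ℕ) < m then a else if (i : ℕ) < n then -a⁻¹ else c

lemma lambdaDiag_ne_zero (ha : a ≠ 0) (hc : c ≠ 0) (i : Fin (n + 1)) :
    lambdaDiag m n a c i ≠ 0 := by
  unfold lambdaDiag
  split_ifs <;> simp [ha, hc]

lemma lambdaDiag_last (hm : m ≤ n) : lambdaDiag m n a c (Fin.last n) = c := by
  simp [lambdaDiag, hm]

variable {m n}

lemma lambdaDiag_sub_inv_of_ne_last {i : Fin (n + 1)} (hi : i ≠ Fin.last n) :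
    lambdaDiag m n a c i - (lambdaDiag m n a c i)⁻¹ = a - a⁻¹ := by
  have hin : (i : ℕ) < n := Fin.val_lt_last hi
  unfold lambdaDiag
  split_ifs
  · rfl
  · rw [inv_neg, inv_inv]; ring

lemma lambdaDiag_ne_of_ne_last (hca : c ≠ a) (hca' : c ≠ -a⁻¹) {i : Fin (n + 1)}
    (hi : i ≠ Fin.last n) :
    lambdaDiag m n a c i ≠ c := by
  have hin : (i : ℕ) < n := Fin.val_lt_last hi
  unfold lambdaDiag
  split_ifs
  · exact hca.symm
  · exact hca'.symm

end Spectrum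

lemma sub_inv_ne_zero {K : Type*} [Field K] {a : K} (ha : a ≠ 0) (ha2 : a ^ 2 ≠ 1) :
    a - a⁻¹ ≠ 0 := by
  intro h
  apply ha2
  field_simp at h
  linear_combination h

theorem stmt7_general {K : Type*} [Field K] (l m : ℕ) (hl : 1 ≤ l) (hm : m ≤ l - 1)
    (a c : K) (ha : a ≠ 0) (hc : c ≠ 0) (ha2 : a ^ 2 ≠ 1) (hca : c ≠ a) (hca' : c ≠ -a⁻¹)
    (T S : Matrix (Fin l) (Fin l) K)
    (hT : T * T.transpose = 1)
    (hS : S = T * Matrix.diagonal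
      (fun i : Fin l => if (i : ℕ) < m then a else if (i : ℕ) < l - 1 then -a⁻¹ else c) * T.transpose)
    (ξ : Fin l → K)
    (hξ : S.mulVec ξ = c • ξ)
    (hnorm : ∑ i, ξ i ^ 2 = 1 - (c - c⁻¹) / (a - a⁻¹)) :
    IsUnit S ∧ S - S⁻¹ = (a⁻¹ - a) • (Matrix.vecMulVec ξ ξ - 1) := by
  obtain ⟨n, rfl⟩ : ∃ n, l = n + 1 := ⟨l - 1, by omega⟩
  change S = T * diagonal (lambdaDiag m n a c) * Tᵀ at hS
  subst hS
  have hd := lambdaDiag_ne_zero m n ha hc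
  refine ⟨.of_mul_eq_one _ (conj_diagonal_mul_conj_diagonal_inv hT hd), ?_⟩
  set η := Tᵀ *ᵥ ξ
  have hη : ∀ i ≠ Fin.last n, η i = 0 := fun i hi =>
    transpose_mulVec_apply_eq_zero hT hξ (lambdaDiag_ne_of_ne_last hca hca' hi)
  have hηξ : η (Fin.last n) ^ 2 = ∑ i, ξ i ^ 2 := by
    rw [sq, ← Finset.sum_eq_single_of_mem (f := fun i => η i * η i) _ (Finset.mem_univ _)
      fun i _ hi => by rw [hη i hi, zero_mul]]
    simpa only [dotProduct, sq] using transpose_mulVec_dotProduct_self hT ξ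
  have hk : lambdaDiag m n a c (Fin.last n) - (lambdaDiag m n a c (Fin.last n))⁻¹ =
      (a - a⁻¹) * (1 - η (Fin.last n) ^ 2) := by
    rw [lambdaDiag_last m n (by omega), hηξ, hnorm, sub_sub_cancel,
      mul_div_cancel₀ _ (sub_inv_ne_zero ha ha2)]
  have hξξ : vecMulVec ξ ξ = T * vecMulVec η η * Tᵀ := by
    rw [mul_vecMulVec, vecMulVec_mul, vecMul_transpose, mulVec_mulVec, hT, one_mulVec]
  rw [conj_diagonal_sub_inv hT hd,
    diagonal_sub_inv_eq_smul_one_sub_vecMulVec (fun i => lambdaDiag_sub_inv_of_ne_last) hη hk,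
    hξξ, Matrix.mul_smul, Matrix.smul_mul, Matrix.mul_sub, Matrix.sub_mul, Matrix.mul_one, hT,
    ← neg_sub a, neg_smul, ← smul_neg, neg_sub]

/-- Let `S = T·Λ·Tᵀ` with `T·Tᵀ = 1`, where `Λ` is diagonal with entries `a`
(multiplicity `m`), `-a⁻¹` (multiplicity `l-m-1`) and `c` (multiplicity 1).
If `ξ` satisfies `S·ξ = c·ξ` and `Σ ξ_i² = 1 - (c - c⁻¹)/(a - a⁻¹) ≠ 0`, then
`S` is invertible and `S - S⁻¹ = (a⁻¹ - a)·(ξ·ξᵀ - I)`. -/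
theorem stmt7 {K : Type*} [Field K] (l m : ℕ) (hl : 1 ≤ l) (hm : m ≤ l - 1)
    (a c : K) (ha : a ≠ 0) (hc : c ≠ 0) (ha2 : a ^ 2 ≠ 1) (hca : c ≠ a) (hca' : c ≠ -a⁻¹)
    (T S : Matrix (Fin l) (Fin l) K)
    (hT : T * T.transpose = 1)
    (hS : S = T * Matrix.diagonal
      (fun i : Fin l => if (i : ℕ) < m then a else if (i : ℕ) < l - 1 then -a⁻¹ else c) * T.transpose)
    (ξ : Fin l → K)
    (hξ : S.mulVec ξ = c • ξ)
    (hnorm : ∑ i, ξ i ^ 2 = 1 - (c - c⁻¹) / (a - a⁻¹))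
    (hne : 1 - (c - c⁻¹) / (a - a⁻¹) ≠ 0) :
    IsUnit S ∧ S - S⁻¹ = (a⁻¹ - a) • (Matrix.vecMulVec ξ ξ - 1) :=
  stmt7_general l m hl hm a c ha hc ha2 hca hca' T S hT hS ξ hξ hnorm
end

section
/- Under the stated hypotheses, and assuming in addition that S has the anti-triangular shape S_{i,j} = 0 whenever i + j < l + 1, S_{i,l+1−i} = a⁻¹ whenever 2i ≠ l + 1, and S_{i,i} = 1 when 2i = l + 1 (indices i, j ∈ {1, ..., l}), one has ξ_i · ξ_{l+1−i} = 1 for every i = 1, ..., l. -/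
/-!
Because `c ≠ a` and `c ≠ -a⁻¹`, the eigenvector `ξ` spans the `c`-eigenline of `S`, so the spectral
data give the rank-one relation `S² = (a - a⁻¹) S + 1 + c (a⁻¹ - a) ξ ξᵀ`; the prescribed value of
`∑ ξᵢ²` is exactly what makes the coefficient of `ξ ξᵀ` come out as `c (a⁻¹ - a)`.

Read in the first row and column of the anti-triangular `S`, this relation and `S ξ = c ξ` give
`c ξ₀² = a⁻¹` and `ξ₀ ξ_{l-1} = 1`, and they show that the inner block `(S i j)_{0 < i, j < l-1}`
satisfies the same hypotheses with `c` replaced by `a² c`. Peeling off layers leaves at most the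
central entry `1`, where `S ξ = c ξ` and the relation force `ξ² = c ξ² = 1`.
-/

open Matrix

lemma mul_inv_cancel_of_sub_inv_ne_zero {K : Type*} [Field K] {a : K} (ha : a - a⁻¹ ≠ 0) :
    a * a⁻¹ = 1 :=
  mul_inv_cancel₀ (by rintro rfl; simp at ha)

section Conjugation

variable {ι : Type*} [Fintype ι]

lemma Matrix.conj_mul_conj {R : Type*} [Semiring R] [DecidableEq ι] {T : Matrix ι ι R}
    (hT : Tᵀ * T = 1) (A B : Matrix ι ι R) : T * A * Tᵀ * (T * B * Tᵀ) = T * (A * B) * Tᵀ := by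
  simp only [Matrix.mul_assoc, ← Matrix.mul_assoc Tᵀ, hT, Matrix.one_mul]

lemma Matrix.vecMulVec_mulVec_mulVec {R : Type*} [CommSemiring R] (T : Matrix ι ι R)
    (u v : ι → R) : vecMulVec (T *ᵥ u) (T *ᵥ v) = T * vecMulVec u v * Tᵀ := by
  rw [mul_vecMulVec, vecMulVec_mul, vecMul_transpose]

lemma Matrix.sum_sq_mulVec {R : Type*} [CommSemiring R] [DecidableEq ι] {T : Matrix ι ι R}
    (hT : Tᵀ * T = 1) (u : ι → R) : ∑ i, (T *ᵥ u) i ^ 2 = ∑ i, u i ^ 2 := by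
  have h : (T *ᵥ u) ⬝ᵥ (T *ᵥ u) = u ⬝ᵥ u := by
    rw [dotProduct_mulVec, ← mulVec_transpose, mulVec_mulVec, hT, one_mulVec, dotProduct_comm]
  simpa only [dotProduct, sq] using h

variable {K : Type*} [Field K] [DecidableEq ι] {T : Matrix ι ι K}

lemma Matrix.eq_mulVec_single_of_mulVec_eq_smul (hT : T * Tᵀ = 1) (hT' : Tᵀ * T = 1)
    {d : ι → K} {c : K} {ξ : ι → K} (hξ : (T * diagonal d * Tᵀ) *ᵥ ξ = c • ξ) {k₀ : ι}
    (hd : ∀ k ≠ k₀, d k ≠ c) : ξ = T *ᵥ Pi.single k₀ ((Tᵀ *ᵥ ξ) k₀) := by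
  have hdiag : diagonal d *ᵥ (Tᵀ *ᵥ ξ) = c • (Tᵀ *ᵥ ξ) := by
    rw [← mulVec_smul, ← hξ, mulVec_mulVec, mulVec_mulVec, ← Matrix.mul_assoc,
      ← Matrix.mul_assoc, hT', Matrix.one_mul]
  have hsupp : Tᵀ *ᵥ ξ = Pi.single k₀ ((Tᵀ *ᵥ ξ) k₀) := by
    ext k
    rcases eq_or_ne k k₀ with rfl | hk
    · simp
    · have hk' := congrFun hdiag k
      simp only [mulVec_diagonal, Pi.smul_apply, smul_eq_mul] at hk'
      rw [Pi.single_eq_of_ne hk]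
      exact (mul_eq_zero.mp (by linear_combination hk')).resolve_left (sub_ne_zero.mpr (hd k hk))
  rw [← hsupp, mulVec_mulVec, hT, one_mulVec]

lemma Matrix.conj_diagonal_mul_self {a c β : K} (hT : T * Tᵀ = 1) (hT' : Tᵀ * T = 1) (ha : a ≠ 0)
    {d : ι → K} {k₀ : ι} (hd₀ : d k₀ = c) (hd : ∀ k ≠ k₀, (d k - a) * (d k + a⁻¹) = 0)
    (hβ : (c - a) * (c + a⁻¹) = c * (a⁻¹ - a) * β ^ 2) :
    T * diagonal d * Tᵀ * (T * diagonal d * Tᵀ) =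
      (a - a⁻¹) • (T * diagonal d * Tᵀ) + 1 +
        (c * (a⁻¹ - a)) • vecMulVec (T *ᵥ Pi.single k₀ β) (T *ᵥ Pi.single k₀ β) := by
  have hconj : (a - a⁻¹) • (T * diagonal d * Tᵀ) + 1 +
      (c * (a⁻¹ - a)) • (T * vecMulVec (Pi.single k₀ β) (Pi.single k₀ β) * Tᵀ) =
      T * ((a - a⁻¹) • diagonal d + 1 +
        (c * (a⁻¹ - a)) • vecMulVec (Pi.single k₀ β) (Pi.single k₀ β)) * Tᵀ := by
    simp only [Matrix.mul_add, Matrix.add_mul, Matrix.mul_smul, Matrix.smul_mul, Matrix.mul_one, hT]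
  rw [conj_mul_conj hT', vecMulVec_mulVec_mulVec, hconj]
  congr 2
  have hinv : a * a⁻¹ = 1 := mul_inv_cancel₀ ha
  ext i j
  rcases eq_or_ne i j with rfl | hij
  · rcases eq_or_ne i k₀ with rfl | hi
    · simp only [smul_apply, add_apply, diagonal_mul_diagonal, diagonal_apply_eq, one_apply_eq,
        vecMulVec_apply, Pi.single_eq_same, hd₀, smul_eq_mul]
      linear_combination hβ + hinv
    · simp only [smul_apply, add_apply, diagonal_mul_diagonal, diagonal_apply_eq, one_apply_eq,
        vecMulVec_apply, Pi.single_eq_of_ne hi, smul_eq_mul]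
      linear_combination hd i hi + hinv
  · have hsingle : (Pi.single k₀ β : ι → K) i * (Pi.single k₀ β : ι → K) j = 0 := by
      rcases eq_or_ne i k₀ with rfl | hi
      · rw [Pi.single_eq_of_ne hij.symm, mul_zero]
      · rw [Pi.single_eq_of_ne hi, zero_mul]
    simp [hij, vecMulVec_apply, hsingle]

lemma Matrix.mul_self_eq_of_conj_diagonal {a c : K} (hc : c ≠ 0) (ha' : a - a⁻¹ ≠ 0)
    (hca : c ≠ a) (hca' : c ≠ -a⁻¹) (hT : T * Tᵀ = 1) {d : ι → K} {k₀ : ι} (hd₀ : d k₀ = c)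
    (hd : ∀ k ≠ k₀, d k = a ∨ d k = -a⁻¹) {S : Matrix ι ι K} (hS : S = T * diagonal d * Tᵀ)
    {ξ : ι → K} (hξ : S *ᵥ ξ = c • ξ) (hnorm : ∑ i, ξ i ^ 2 = 1 - (c - c⁻¹) / (a - a⁻¹)) :
    S * S = (a - a⁻¹) • S + 1 + (c * (a⁻¹ - a)) • vecMulVec ξ ξ := by
  have hinv := mul_inv_cancel_of_sub_inv_ne_zero ha'
  have hT' : Tᵀ * T = 1 := mul_eq_one_comm.mp hT
  obtain ⟨β, hξT⟩ : ∃ β, ξ = T *ᵥ Pi.single k₀ β :=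
    ⟨_, eq_mulVec_single_of_mulVec_eq_smul hT hT' (hS ▸ hξ) (k₀ := k₀)
      (fun k hk => by rcases hd k hk with h | h <;> rw [h] <;> [exact hca.symm; exact hca'.symm])⟩
  have hβ : β ^ 2 = 1 - (c - c⁻¹) / (a - a⁻¹) := by
    rw [← hnorm, hξT, sum_sq_mulVec hT']
    simp [Pi.single_apply]
  rw [hS, hξT]
  refine conj_diagonal_mul_self hT hT' (left_ne_zero_of_mul_eq_one hinv) hd₀
    (fun k hk => by rcases hd k hk with h | h <;> rw [h] <;> ring) ?_
  rw [hβ]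
  linear_combination (-c) * div_mul_cancel₀ (c - c⁻¹) ha' + mul_inv_cancel₀ hc - hinv

end Conjugation

def Fin.inner {n : ℕ} (i : Fin n) : Fin (n + 2) := i.castSucc.succ

namespace Fin

variable {n : ℕ}

@[simp] lemma val_inner (i : Fin n) : (i.inner : ℕ) = i + 1 := rfl

lemma inner_ne_zero (i : Fin n) : i.inner ≠ 0 := succ_ne_zero _

lemma inner_injective : Function.Injective (inner : Fin n → Fin (n + 2)) :=
  fun i j h => Fin.ext (by simpa using congrArg Fin.val h)

lemma sum_univ_eq_zero_add_last_add_inner {M : Type*} [AddCommMonoid M] (f : Fin (n + 2) → M) :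
    ∑ k, f k = f 0 + f (last _) + ∑ i : Fin n, f i.inner := by
  rw [sum_univ_succ, sum_univ_castSucc, succ_last]
  unfold inner
  abel

lemma eq_zero_or_eq_last_or_eq_inner (k : Fin (n + 2)) :
    k = 0 ∨ k = last _ ∨ ∃ i : Fin n, k = i.inner := by
  induction k using Fin.cases with
  | zero => exact Or.inl rfl
  | succ k =>
    induction k using Fin.lastCases with
    | last => exact Or.inr (Or.inl (succ_last n))
    | cast i => exact Or.inr (Or.inr ⟨i, rfl⟩)

end Fin

section Antitriangular

variable {K : Type*} [Field K]

structure Matrix.IsAntitriangular {l : ℕ} (b : K) (S : Matrix (Fin l) (Fin l) K) : Prop where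
  apply_eq_zero : ∀ i j : Fin l, (i : ℕ) + (j : ℕ) + 1 < l → S i j = 0
  apply_antidiag : ∀ i j : Fin l, (i : ℕ) + (j : ℕ) + 1 = l → (i : ℕ) ≠ (j : ℕ) → S i j = b
  apply_center : ∀ i : Fin l, 2 * (i : ℕ) + 1 = l → S i i = 1

lemma Matrix.sum_mul_apply_of_mul_self_eq {l : ℕ} {S : Matrix (Fin l) (Fin l) K} {ξ : Fin l → K}
    {α γ : K} (hsq : S * S = α • S + 1 + γ • vecMulVec ξ ξ) (i j : Fin l) :
    ∑ k, S i k * S k j = α * S i j + (if i = j then 1 else 0) + γ * (ξ i * ξ j) := by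
  simpa [mul_apply, one_apply, vecMulVec_apply] using congrFun₂ hsq i j

namespace Matrix.IsAntitriangular

variable {a b c : K} {n : ℕ} {S : Matrix (Fin (n + 2)) (Fin (n + 2)) K} {ξ : Fin (n + 2) → K}

lemma submatrix_inner (hS : S.IsAntitriangular b) :
    (S.submatrix Fin.inner Fin.inner).IsAntitriangular b where
  apply_eq_zero i j h := hS.apply_eq_zero _ _ (by simp; omega)
  apply_antidiag i j h hij := hS.apply_antidiag _ _ (by simp; omega) (by simpa using hij)
  apply_center i h := hS.apply_center _ (by simp; omega)

lemma apply_zero_zero (hS : S.IsAntitriangular b) : S 0 0 = 0 :=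
  hS.apply_eq_zero _ _ (by simp)

lemma apply_zero_last (hS : S.IsAntitriangular b) : S 0 (Fin.last _) = b :=
  hS.apply_antidiag _ _ (by simp) (by simp)

lemma apply_inner_zero (hS : S.IsAntitriangular b) (i : Fin n) : S i.inner 0 = 0 :=
  hS.apply_eq_zero _ _ (by simp)

lemma apply_zero_inner (hS : S.IsAntitriangular b) (i : Fin n) : S 0 i.inner = 0 :=
  hS.apply_eq_zero _ _ (by simp)

variable (hS : S.IsAntitriangular a⁻¹) (hsymm : S.IsSymm) (ha : a - a⁻¹ ≠ 0)
  (hsq : S * S = (a - a⁻¹) • S + 1 + (c * (a⁻¹ - a)) • vecMulVec ξ ξ)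
include hS hsymm ha hsq

lemma mul_sq_apply_zero : c * ξ 0 ^ 2 = a⁻¹ := by
  have h := sum_mul_apply_of_mul_self_eq hsq 0 0
  simp only [Fin.sum_univ_eq_zero_add_last_add_inner, hS.apply_zero_zero, hS.apply_zero_inner,
    hS.apply_zero_last, hsymm.apply 0 (Fin.last _), zero_mul, Finset.sum_const_zero,
    ↓reduceIte] at h
  have h' : (a⁻¹ - a) * (c * ξ 0 ^ 2 - a⁻¹) = 0 := by
    linear_combination -h + mul_inv_cancel_of_sub_inv_ne_zero ha
  exact sub_eq_zero.mp ((mul_eq_zero.mp h').resolve_left fun h0 => ha (by linear_combination -h0))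

lemma apply_inner_last (i : Fin n) :
    S i.inner (Fin.last _) = a * c * (a⁻¹ - a) * ξ i.inner * ξ 0 := by
  have h := sum_mul_apply_of_mul_self_eq hsq i.inner 0
  simp only [Fin.sum_univ_eq_zero_add_last_add_inner, hS.apply_zero_zero, hS.apply_inner_zero,
    hsymm.apply 0 (Fin.last _), hS.apply_zero_last, mul_zero, Finset.sum_const_zero,
    Fin.inner_ne_zero, if_false] at h
  linear_combination a * h - S i.inner (Fin.last _) * mul_inv_cancel_of_sub_inv_ne_zero ha

lemma apply_zero_mul_apply_last (heig : S *ᵥ ξ = c • ξ) : ξ 0 * ξ (Fin.last _) = 1 := by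
  have h : ∑ k, S 0 k * ξ k = c * ξ 0 := congrFun heig 0
  simp only [Fin.sum_univ_eq_zero_add_last_add_inner, hS.apply_zero_zero, hS.apply_zero_inner,
    hS.apply_zero_last, zero_mul, Finset.sum_const_zero] at h
  linear_combination a * ξ 0 * h + a * hS.mul_sq_apply_zero hsymm ha hsq
    + (1 - ξ 0 * ξ (Fin.last _)) * mul_inv_cancel_of_sub_inv_ne_zero ha

lemma submatrix_inner_mulVec (heig : S *ᵥ ξ = c • ξ) :
    S.submatrix Fin.inner Fin.inner *ᵥ (ξ ∘ Fin.inner) = (a ^ 2 * c) • (ξ ∘ Fin.inner) := by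
  ext i
  have h : ∑ k, S i.inner k * ξ k = c * ξ i.inner := congrFun heig _
  simp only [Fin.sum_univ_eq_zero_add_last_add_inner, hS.apply_inner_zero,
    hS.apply_inner_last hsymm ha hsq, zero_mul] at h
  show ∑ j : Fin n, S i.inner j.inner * ξ j.inner = a ^ 2 * c * ξ i.inner
  linear_combination h
    - a * c * (a⁻¹ - a) * ξ i.inner * hS.apply_zero_mul_apply_last hsymm ha hsq heig
    - c * ξ i.inner * mul_inv_cancel_of_sub_inv_ne_zero ha

lemma submatrix_inner_mul_self :
    S.submatrix Fin.inner Fin.inner * S.submatrix Fin.inner Fin.inner =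
      (a - a⁻¹) • S.submatrix Fin.inner Fin.inner + 1 +
        (a ^ 2 * c * (a⁻¹ - a)) • vecMulVec (ξ ∘ Fin.inner) (ξ ∘ Fin.inner) := by
  ext i j
  have h := sum_mul_apply_of_mul_self_eq hsq i.inner j.inner
  simp only [Fin.sum_univ_eq_zero_add_last_add_inner, hS.apply_inner_zero, hS.apply_zero_inner,
    hsymm.apply j.inner (Fin.last _), hS.apply_inner_last hsymm ha hsq, Fin.inner_injective.eq_iff,
    zero_mul] at h
  simp only [mul_apply, submatrix_apply, add_apply, smul_apply, one_apply, vecMulVec_apply,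
    Function.comp_apply, smul_eq_mul]
  linear_combination h
    - a ^ 2 * c * (a⁻¹ - a) ^ 2 * ξ i.inner * ξ j.inner * hS.mul_sq_apply_zero hsymm ha hsq
    + c * (a⁻¹ - a) * ξ i.inner * ξ j.inner * (a ^ 2 - a * a⁻¹ - 1)
      * mul_inv_cancel_of_sub_inv_ne_zero ha

end Matrix.IsAntitriangular

theorem Matrix.IsAntitriangular.apply_mul_apply_eq_one {a : K} (ha : a - a⁻¹ ≠ 0) {l : ℕ} {c : K}
    {S : Matrix (Fin l) (Fin l) K} {ξ : Fin l → K} (hS : S.IsAntitriangular a⁻¹) (hsymm : S.IsSymm)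
    (heig : S *ᵥ ξ = c • ξ) (hsq : S * S = (a - a⁻¹) • S + 1 + (c * (a⁻¹ - a)) • vecMulVec ξ ξ) :
    ∀ i j : Fin l, (i : ℕ) + (j : ℕ) + 1 = l → ξ i * ξ j = 1 := by
  induction l using Nat.twoStepInduction generalizing c with
  | zero => exact fun i => i.elim0
  | one =>
    intro i j _
    obtain rfl : i = 0 := Subsingleton.elim _ _
    obtain rfl : j = 0 := Subsingleton.elim _ _
    have hS₀ : S 0 0 = 1 := hS.apply_center 0 rfl
    have heig₀ : ∑ k, S 0 k * ξ k = c * ξ 0 := congrFun heig 0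
    have hsq₀ := sum_mul_apply_of_mul_self_eq hsq 0 0
    simp only [Fin.sum_univ_one, hS₀, ↓reduceIte] at heig₀ hsq₀
    have h : (a - a⁻¹) * (c * (ξ 0 * ξ 0) - 1) = 0 := by linear_combination hsq₀
    have hc : c * (ξ 0 * ξ 0) = 1 := sub_eq_zero.mp ((mul_eq_zero.mp h).resolve_left ha)
    linear_combination ξ 0 * heig₀ + hc
  | more n ih _ =>
    have hinner := ih hS.submatrix_inner (hsymm.submatrix _)
      (hS.submatrix_inner_mulVec hsymm ha hsq heig) (hS.submatrix_inner_mul_self hsymm ha hsq)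
    have hcorner := hS.apply_zero_mul_apply_last hsymm ha hsq heig
    intro i j hij
    rcases Fin.eq_zero_or_eq_last_or_eq_inner i with rfl | rfl | ⟨i, rfl⟩
    · obtain rfl : j = Fin.last _ := Fin.ext (by simp at hij ⊢; omega)
      exact hcorner
    · obtain rfl : j = 0 := Fin.ext (by simp at hij ⊢; omega)
      rw [mul_comm]
      exact hcorner
    · rcases Fin.eq_zero_or_eq_last_or_eq_inner j with rfl | rfl | ⟨j, rfl⟩
      · simp at hij; omega
      · simp at hij
      · exact hinner i j (by simp at hij; omega)

end Antitriangular

-- Indices are 0-based: the paper's `ξ_i ξ_{l+1-i}` is `ξ i * ξ j` with `i + j + 1 = l`.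
theorem stmt8_general {K : Type*} [Field K] (l m : ℕ) (hl : 1 ≤ l) (hm : m ≤ l - 1)
    (a c : K) (ha : a ≠ 0) (hc : c ≠ 0) (ha2 : a ^ 2 ≠ 1) (hca : c ≠ a) (hca' : c ≠ -a⁻¹)
    (T S : Matrix (Fin l) (Fin l) K)
    (hT : T * T.transpose = 1)
    (hS : S = T * Matrix.diagonal
      (fun i : Fin l => if (i : ℕ) < m then a else if (i : ℕ) < l - 1 then -a⁻¹ else c) *
        T.transpose)
    (ξ : Fin l → K)
    (hξ : S.mulVec ξ = c • ξ)
    (hnorm : ∑ i, ξ i ^ 2 = 1 - (c - c⁻¹) / (a - a⁻¹))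
    (hshape0 : ∀ i j : Fin l, (i : ℕ) + (j : ℕ) + 1 < l → S i j = 0)
    (hshape1 : ∀ i j : Fin l, (i : ℕ) + (j : ℕ) + 1 = l → (i : ℕ) ≠ (j : ℕ) → S i j = a⁻¹)
    (hshape2 : ∀ i : Fin l, 2 * (i : ℕ) + 1 = l → S i i = 1) :
    ∀ i j : Fin l, (i : ℕ) + (j : ℕ) + 1 = l → ξ i * ξ j = 1 := by
  have ha' : a - a⁻¹ ≠ 0 := fun h => ha2 (by linear_combination a * h + mul_inv_cancel₀ ha)
  set d : Fin l → K := fun i => if (i : ℕ) < m then a else if (i : ℕ) < l - 1 then -a⁻¹ else c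
  set k₀ : Fin l := ⟨l - 1, by omega⟩
  have hd₀ : d k₀ = c := by simp [d, k₀, hm]
  have hd : ∀ k ≠ k₀, d k = a ∨ d k = -a⁻¹ := by
    intro k hk
    have hk' : (k : ℕ) < l - 1 := by
      have := Fin.val_ne_of_ne hk
      simp only [k₀] at this
      omega
    by_cases h : (k : ℕ) < m <;> simp [d, h, hk']
  have hsq := mul_self_eq_of_conj_diagonal hc ha' hca hca' hT hd₀ hd hS hξ hnorm
  have hsymm : S.IsSymm := by
    rw [hS, IsSymm, transpose_mul, transpose_mul, transpose_transpose, diagonal_transpose,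
      Matrix.mul_assoc]
  exact IsAntitriangular.apply_mul_apply_eq_one ha' ⟨hshape0, hshape1, hshape2⟩ hsymm hξ hsq

/-- Under the hypotheses of the previous lemma, if in addition `S` has the
anti-triangular shape (`S_{i,j} = 0` above the anti-diagonal, `S = a⁻¹` on the
off-center anti-diagonal, and `S = 1` at the center; 1-based indices translated
to 0-based ones), then `ξ_i · ξ_{l+1-i} = 1` for every `i`. -/
theorem stmt8 {K : Type*} [Field K] (l m : ℕ) (hl : 1 ≤ l) (hm : m ≤ l - 1)
    (a c : K) (ha : a ≠ 0) (hc : c ≠ 0) (ha2 : a ^ 2 ≠ 1) (hca : c ≠ a) (hca' : c ≠ -a⁻¹)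
    (T S : Matrix (Fin l) (Fin l) K)
    (hT : T * T.transpose = 1)
    (hS : S = T * Matrix.diagonal
      (fun i : Fin l => if (i : ℕ) < m then a else if (i : ℕ) < l - 1 then -a⁻¹ else c) *
        T.transpose)
    (ξ : Fin l → K)
    (hξ : S.mulVec ξ = c • ξ)
    (hnorm : ∑ i, ξ i ^ 2 = 1 - (c - c⁻¹) / (a - a⁻¹))
    (hne : 1 - (c - c⁻¹) / (a - a⁻¹) ≠ 0)
    (hshape0 : ∀ i j : Fin l, (i : ℕ) + (j : ℕ) + 1 < l → S i j = 0)
    (hshape1 : ∀ i j : Fin l, (i : ℕ) + (j : ℕ) + 1 = l → (i : ℕ) ≠ (j : ℕ) → S i j = a⁻¹)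
    (hshape2 : ∀ i : Fin l, 2 * (i : ℕ) + 1 = l → S i i = 1) :
    ∀ i j : Fin l, (i : ℕ) + (j : ℕ) + 1 = l → ξ i * ξ j = 1 :=
  stmt8_general l m hl hm a c ha hc ha2 hca hca' T S hT hS ξ hξ hnorm hshape0 hshape1 hshape2
end

section
/- (Even case of the constraint lemma.) Under the stated hypotheses with m even, one has: u_a = γ^{2a−m−1} for m/2 < a ≤ m; u_{m/2} = 1; u_a = γ^{2a−m+1} for 0 ≤ a < m/2; C = γ^m; and β_a = (γ − γ⁻¹)(1 − γ^{2a−m+1}) for every 0 ≤ a < m/2. -/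
/-!
Write `m = 2n` and `c = γ - γ⁻¹`. Subtracting consecutive equations (i) (and (ii) from the first
of them) gives `u (a + 1) = γ² u a` for `n < a < m` and `u (n + 1) = γ u n`, while `u n = 1` and
`u a u (m - a) = 1` come straight from `w_a v_{m-a} = 1`. This fixes the upper half, the lower
half by reflection, and `C = γ u m = γ ^ m`. Once all `u a` are known, `c · u (m - e)` is a
difference of consecutive powers of `γ`, so the sum in (iii) telescopes and (iii) becomes linear
in `β a`.
-/

open Finset

namespace FusionConstraint

variable {K : Type*} [Field K] {γ : K}

theorem mul_reflect_eq_one {M : Type*} [CommMonoid M] {m : ℕ} {v w u : ℕ → M}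
    (hvw : ∀ a ≤ m, w a * v (m - a) = 1) (hu : ∀ a, u a = v a * w a) {a : ℕ} (ha : a ≤ m) :
    u a * u (m - a) = 1 := by
  have hl := hvw a ha
  have hr := hvw (m - a) (Nat.sub_le m a)
  rw [Nat.sub_sub_self ha] at hr
  calc u a * u (m - a) = (w a * v (m - a)) * (w (m - a) * v a) := by rw [hu, hu]; ac_rfl
    _ = 1 := by rw [hl, hr, one_mul]

theorem sum_range_sub_eq_add {M : Type*} [AddCommMonoid M] (u : ℕ → M) {m a : ℕ} (ha : a < m) :
    ∑ e ∈ range (m - a), u (m - e) = ∑ e ∈ range (m - (a + 1)), u (m - e) + u (a + 1) := by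
  rw [show m - a = m - (a + 1) + 1 by omega, sum_range_succ, show m - (m - (a + 1)) = a + 1 by omega]

theorem sub_inv_mul_zpow (hγ : γ ≠ 0) (p : ℤ) :
    (γ - γ⁻¹) * γ ^ p = γ ^ (p + 1) - γ ^ (p - 1) := by
  rw [sub_mul, zpow_add_one₀ hγ, zpow_sub_one₀ hγ]
  ring

theorem eq_sq_mul_of_consecutive (hγ : γ ≠ 0) {x y S C : K}
    (hx : γ * x + (γ - γ⁻¹) * (S + y) = C) (hy : γ * y + (γ - γ⁻¹) * S = C) :
    y = γ ^ 2 * x := by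
  linear_combination γ * (hy - hx) - y * mul_inv_cancel₀ hγ

theorem eq_mul_of_consecutive_middle (hγ : γ ≠ 0) {x y S C : K}
    (hx : x + (γ - γ⁻¹) * (S + y) = C) (hy : γ * y + (γ - γ⁻¹) * S = C) :
    y = γ * x := by
  linear_combination γ * (hy - hx) - y * mul_inv_cancel₀ hγ

variable {m n : ℕ} {u : ℕ → K} {C : K}

theorem upper_eq_zpow (hγ : γ ≠ 0) (hmn : m = n + n) (hun : u n = 1)
    (h1 : ∀ a, n < a → a ≤ m →
      γ * u a + (γ - γ⁻¹) * ∑ e ∈ range (m - a), u (m - e) = C)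
    (h2 : u n + (γ - γ⁻¹) * ∑ e ∈ range n, u (m - e) = C) :
    ∀ a, n < a → a ≤ m → u a = γ ^ (2 * (a : ℤ) - m - 1) := by
  intro a ha
  induction a, ha using Nat.le_induction with
  | base =>
    intro hnm
    have hsum := sum_range_sub_eq_add u (m := m) (a := n) (by omega)
    rw [show m - n = n by omega] at hsum
    have hbase := eq_mul_of_consecutive_middle hγ (hsum ▸ h2) (h1 (n + 1) (by omega) hnm)
    rw [hbase, hun, mul_one, show 2 * ((n + 1 : ℕ) : ℤ) - m - 1 = 1 by omega, zpow_one]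
  | succ a ha ih =>
    intro ham
    have hx := h1 a (by omega) (by omega)
    rw [sum_range_sub_eq_add u (by omega)] at hx
    rw [eq_sq_mul_of_consecutive hγ hx (h1 (a + 1) (by omega) ham), ih (by omega),
      ← zpow_natCast, ← zpow_add₀ hγ]
    congr 1
    push_cast
    ring

theorem lower_eq_zpow (hmn : m = n + n)
    (hrefl : ∀ a ≤ m, u a * u (m - a) = 1)
    (hupper : ∀ a, n < a → a ≤ m → u a = γ ^ (2 * (a : ℤ) - m - 1)) :
    ∀ a, a < n → u a = γ ^ (2 * (a : ℤ) - m + 1) := by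
  intro a ha
  have h := hrefl a (by omega)
  rw [hupper (m - a) (by omega) (by omega)] at h
  rw [eq_inv_of_mul_eq_one_left h, ← zpow_neg]
  congr 1
  push_cast [show a ≤ m by omega]
  ring

theorem sub_inv_mul_tail_sum (hγ : γ ≠ 0) (hmn : m = n + n) (hun : u n = 1)
    (h2 : u n + (γ - γ⁻¹) * ∑ e ∈ range n, u (m - e) = C)
    (hlower : ∀ a, a < n → u a = γ ^ (2 * (a : ℤ) - m + 1)) :
    ∀ k, n < k → k ≤ m →
      (γ - γ⁻¹) * ∑ e ∈ range k, u (m - e) = C + γ - γ⁻¹ - γ ^ ((m : ℤ) + 2 - 2 * k) := by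
  intro k hk
  induction k, hk using Nat.le_induction with
  | base =>
    intro _
    rw [sum_range_succ, show m - n = n by omega, hun,
      show (m : ℤ) + 2 - 2 * ((n + 1 : ℕ) : ℤ) = 0 by omega, zpow_zero]
    linear_combination h2 - hun
  | succ k hk ih =>
    intro hkm
    rw [sum_range_succ, mul_add, ih (by omega), hlower (m - k) (by omega),
      show 2 * ((m - k : ℕ) : ℤ) - m + 1 = (m : ℤ) + 2 - 2 * k - 1 by omega, sub_inv_mul_zpow hγ,
      show (m : ℤ) + 2 - 2 * k - 1 + 1 = m + 2 - 2 * k by ring,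
      show (m : ℤ) + 2 - 2 * k - 1 - 1 = m + 2 - 2 * ((k + 1 : ℕ) : ℤ) by push_cast; ring]
    ring

theorem beta_eq (hγ : γ ≠ 0) (hmn : m = n + n) (hrefl : ∀ a ≤ m, u a * u (m - a) = 1)
    (hlower : ∀ a, a < n → u a = γ ^ (2 * (a : ℤ) - m + 1))
    (htail : ∀ k, n < k → k ≤ m →
      (γ - γ⁻¹) * ∑ e ∈ range k, u (m - e) = C + γ - γ⁻¹ - γ ^ ((m : ℤ) + 2 - 2 * k))
    {a : ℕ} (ha : a < n) {β : K}
    (h3 : γ * u a + (γ - γ⁻¹) * ∑ e ∈ (range (m - a)).erase a, u (m - e)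
        + β * u (m - a) = C) :
    β = (γ - γ⁻¹) * (1 - γ ^ (2 * (a : ℤ) - m + 1)) := by
  have hmem : a ∈ range (m - a) := mem_range.2 (by omega)
  -- `γ u a` cancels against the power of `γ` in the closed form of the tail sum.
  have hγu : γ * u a = γ ^ ((m : ℤ) + 2 - 2 * ((m - a : ℕ) : ℤ)) := by
    rw [hlower a ha, ← zpow_one_add₀ hγ]
    congr 1
    push_cast [show a ≤ m by omega]
    ring
  rw [sum_erase_eq_sub hmem, mul_sub, htail (m - a) (by omega) (by omega), hγu] at h3
  rw [← hlower a ha]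
  linear_combination u a * h3 - (β - γ + γ⁻¹) * hrefl a (by omega)

end FusionConstraint

open FusionConstraint in
theorem stmt9_general {K : Type*} [Field K] (m : ℕ) (hm : 2 ≤ m) (hmeven : Even m)
    (γ : K) (hγ : γ ≠ 0)
    (v w u : ℕ → K)
    (hvw : ∀ a ≤ m, w a * v (m - a) = 1)
    (hu : ∀ a, u a = v a * w a)
    (C : K) (β : ℕ → K)
    (h1 : ∀ a, m / 2 < a → a ≤ m →
      γ * u a + (γ - γ⁻¹) * ∑ e ∈ Finset.range (m - a), u (m - e) = C)
    (h2 : u (m / 2) + (γ - γ⁻¹) * ∑ e ∈ Finset.range (m / 2), u (m - e) = C)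
    (h3 : ∀ a, a < m / 2 →
      γ * u a + (γ - γ⁻¹) * ∑ e ∈ (Finset.range (m - a)).erase a, u (m - e)
        + β a * u (m - a) = C) :
    (∀ a, m / 2 < a → a ≤ m → u a = γ ^ (2 * (a : ℤ) - m - 1)) ∧
    u (m / 2) = 1 ∧
    (∀ a, a < m / 2 → u a = γ ^ (2 * (a : ℤ) - m + 1)) ∧
    C = γ ^ m ∧
    (∀ a, a < m / 2 → β a = (γ - γ⁻¹) * (1 - γ ^ (2 * (a : ℤ) - m + 1))) := by
  have hmn : m = m / 2 + m / 2 := by obtain ⟨r, rfl⟩ := hmeven; omega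
  have hrefl : ∀ a ≤ m, u a * u (m - a) = 1 := fun a ha => mul_reflect_eq_one hvw hu ha
  have hmid : u (m / 2) = 1 := by
    have h := hvw (m / 2) (by omega)
    rwa [show m - m / 2 = m / 2 by omega, mul_comm, ← hu] at h
  have hupper := upper_eq_zpow hγ hmn hmid h1 h2
  have hlower := lower_eq_zpow hmn hrefl hupper
  have hC : C = γ ^ m := by
    have h := h1 m (by omega) le_rfl
    rw [Nat.sub_self, range_zero, sum_empty, mul_zero, add_zero, hupper m (by omega) le_rfl,
      ← zpow_one_add₀ hγ] at h
    rw [← h, ← zpow_natCast]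
    congr 1
    ring
  have htail := sub_inv_mul_tail_sum hγ hmn hmid h2 hlower
  exact ⟨hupper, hmid, hlower, hC, fun a ha => beta_eq hγ hmn hrefl hlower htail ha (h3 a ha)⟩

/-- Even case of the constraint lemma for the fusion/braiding matrices. -/
theorem stmt9 {K : Type*} [Field K] (m : ℕ) (hm : 2 ≤ m) (hmeven : Even m)
    (γ : K) (hγ : γ ≠ 0) (hγ2 : γ ^ 2 ≠ 1)
    (v w u : ℕ → K)
    (hvw : ∀ a ≤ m, w a * v (m - a) = 1)
    (hu : ∀ a, u a = v a * w a)
    (C : K) (β : ℕ → K)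
    (h1 : ∀ a, m / 2 < a → a ≤ m →
      γ * u a + (γ - γ⁻¹) * ∑ e ∈ Finset.range (m - a), u (m - e) = C)
    (h2 : u (m / 2) + (γ - γ⁻¹) * ∑ e ∈ Finset.range (m / 2), u (m - e) = C)
    (h3 : ∀ a, a < m / 2 →
      γ * u a + (γ - γ⁻¹) * ∑ e ∈ (Finset.range (m - a)).erase a, u (m - e)
        + β a * u (m - a) = C) :
    (∀ a, m / 2 < a → a ≤ m → u a = γ ^ (2 * (a : ℤ) - m - 1)) ∧
    u (m / 2) = 1 ∧
    (∀ a, a < m / 2 → u a = γ ^ (2 * (a : ℤ) - m + 1)) ∧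
    C = γ ^ m ∧
    (∀ a, a < m / 2 → β a = (γ - γ⁻¹) * (1 - γ ^ (2 * (a : ℤ) - m + 1))) :=
  stmt9_general m hm hmeven γ hγ v w u hvw hu C β h1 h2 h3
end

section
/- (Odd case of the constraint lemma.) Under the stated hypotheses with m odd, setting x := u_{(m+1)/2}, one has: x ≠ 0; u_a = x·γ^{2a−m−1} for all a with m/2 < a ≤ m; u_a = x⁻¹·γ^{2a−m+1} for all a with 0 ≤ a < m/2; C = x·γ^m; and β_a = γ − γ⁻¹ + (γ⁻¹ − x⁻²·γ)·γ^{2a−m+1} for every 0 ≤ a < m/2. -/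
/-! The constraints say that `T a := γ u_a + (γ - γ⁻¹) ∑_{b > a} u_b` equals `C` for `a > m/2`,
and differs from `C` by a multiple of `u_{m-a}` for `a < m/2`. Since
`T a - T (a+1) = γ u_a - γ⁻¹ u_{a+1}`, the upper half is geometric with ratio `γ²`, starting at
`x = u_{(m+1)/2}`. The relation `w_a v_{m-a} = 1` gives `u_a u_{m-a} = 1`, which reflects this to
the lower half, again with ratio `γ²`. Hence `T` is constant on the lower half too, with a single
jump `γ x⁻¹ - γ⁻¹ x` across the middle, and this jump determines `β_a`. -/

open Finset

lemma mul_mul_mul_sub_eq_one {M : Type*} [CommMonoid M] {m : ℕ} {v w : ℕ → M}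
    (hvw : ∀ a ≤ m, w a * v (m - a) = 1) {a : ℕ} (ha : a ≤ m) :
    v a * w a * (v (m - a) * w (m - a)) = 1 := by
  have h := hvw (m - a) (Nat.sub_le m a)
  rw [Nat.sub_sub_self ha] at h
  calc v a * w a * (v (m - a) * w (m - a)) = w (m - a) * v a * (w a * v (m - a)) := by ac_rfl
    _ = 1 := by rw [h, hvw a ha, one_mul]

namespace Constraint

variable {K : Type*} [Field K] (γ : K) (u : ℕ → K) (m : ℕ)

/-- `∑_{e < m - a} u (m - e)` is `∑_{a < b ≤ m} u b`. -/
def lhs (a : ℕ) : K := γ * u a + (γ - γ⁻¹) * ∑ e ∈ range (m - a), u (m - e)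

lemma lhs_self : lhs γ u m m = γ * u m := by
  simp [lhs]

lemma lhs_sub_lhs_succ {a : ℕ} (ha : a < m) :
    lhs γ u m a - lhs γ u m (a + 1) = γ * u a - γ⁻¹ * u (a + 1) := by
  rw [lhs, lhs, show m - a = m - (a + 1) + 1 by omega, sum_range_succ,
    show m - (m - (a + 1)) = a + 1 by omega]
  ring

lemma lhs_erase {a : ℕ} (ha : 2 * a < m) :
    γ * u a + (γ - γ⁻¹) * ∑ e ∈ (range (m - a)).erase a, u (m - e)
      = lhs γ u m a - (γ - γ⁻¹) * u (m - a) := by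
  rw [sum_erase_eq_sub (mem_range.2 (by omega)), lhs]
  ring

variable {γ u m} {n : ℕ}

lemma upper_half_eq (hγ : γ ≠ 0) (hn : m = 2 * n + 1) {C : K}
    (h1 : ∀ a, m < 2 * a → a ≤ m → lhs γ u m a = C) :
    ∀ a, m < 2 * a → a ≤ m → u a = u (n + 1) * γ ^ (2 * (a : ℤ) - m - 1) := by
  have step : ∀ a, m < 2 * a → a < m → u (a + 1) = γ ^ 2 * u a := by
    intro a ha ham
    have h := lhs_sub_lhs_succ γ u m ham
    rw [h1 a ha ham.le, h1 (a + 1) (by omega) ham, sub_self] at h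
    linear_combination γ * h - u (a + 1) * mul_inv_cancel₀ hγ
  suffices h : ∀ a, n + 1 ≤ a → a ≤ m → u a = u (n + 1) * γ ^ (2 * (a : ℤ) - m - 1) from
    fun a ha => h a (by omega)
  intro a ha
  induction a, ha using Nat.le_induction with
  | base => intro _; rw [show 2 * ((n + 1 : ℕ) : ℤ) - m - 1 = 0 by omega, zpow_zero, mul_one]
  | succ a ha ih =>
    intro ham
    rw [step a (by omega) (by omega), ih (by omega),
      show 2 * ((a + 1 : ℕ) : ℤ) - m - 1 = 2 * (a : ℤ) - m - 1 + 2 by push_cast; ring,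
      zpow_add₀ hγ, zpow_two]
    ring

lemma lower_half_eq (hrefl : ∀ a ≤ m, u a * u (m - a) = 1) {x : K}
    (hupper : ∀ a, m < 2 * a → a ≤ m → u a = x * γ ^ (2 * (a : ℤ) - m - 1)) :
    ∀ a, 2 * a < m → u a = x⁻¹ * γ ^ (2 * (a : ℤ) - m + 1) := by
  intro a ha
  rw [eq_inv_of_mul_eq_one_left (hrefl a (by omega)), hupper (m - a) (by omega) (Nat.sub_le m a),
    mul_inv, ← zpow_neg]
  congr 2
  omega

lemma lhs_eq_of_le_mid (hγ : γ ≠ 0) (hn : m = 2 * n + 1) {C : K} (hmid : lhs γ u m (n + 1) = C)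
    (hlower : ∀ a, 2 * a < m → u a = (u (n + 1))⁻¹ * γ ^ (2 * (a : ℤ) - m + 1)) :
    ∀ a ≤ n, lhs γ u m a = C + γ * (u (n + 1))⁻¹ - γ⁻¹ * u (n + 1) := by
  intro a ha
  induction ha using Nat.decreasingInduction with
  | self =>
    have h := lhs_sub_lhs_succ γ u m (a := n) (by omega)
    rw [hmid, hlower n (by omega), show 2 * (n : ℤ) - m + 1 = 0 by omega, zpow_zero,
      mul_one] at h
    linear_combination h
  | of_succ b hb ih =>
    have h := lhs_sub_lhs_succ γ u m (a := b) (by omega)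
    rw [ih, hlower b (by omega), hlower (b + 1) (by omega),
      show 2 * ((b + 1 : ℕ) : ℤ) - m + 1 = 2 * (b : ℤ) - m + 1 + 2 by push_cast; ring,
      zpow_add₀ hγ _ 2, zpow_two] at h
    linear_combination h - (u (n + 1))⁻¹ * γ ^ (2 * (b : ℤ) - m + 1) * γ * inv_mul_cancel₀ hγ

end Constraint

theorem stmt10_general {K : Type*} [Field K] (m : ℕ) (hmodd : Odd m)
    (γ : K) (hγ : γ ≠ 0)
    (v w u : ℕ → K)
    (hvw : ∀ a ≤ m, w a * v (m - a) = 1)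
    (hu : ∀ a, u a = v a * w a)
    (C : K) (β : ℕ → K)
    (h1 : ∀ a, m < 2 * a → a ≤ m →
      γ * u a + (γ - γ⁻¹) * ∑ e ∈ Finset.range (m - a), u (m - e) = C)
    (h2 : ∀ a, 2 * a < m →
      γ * u a + (γ - γ⁻¹) * ∑ e ∈ (Finset.range (m - a)).erase a, u (m - e)
        + β a * u (m - a) = C) :
    u ((m + 1) / 2) ≠ 0 ∧
    (∀ a, m < 2 * a → a ≤ m → u a = u ((m + 1) / 2) * γ ^ (2 * (a : ℤ) - m - 1)) ∧
    (∀ a, 2 * a < m → u a = (u ((m + 1) / 2))⁻¹ * γ ^ (2 * (a : ℤ) - m + 1)) ∧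
    C = u ((m + 1) / 2) * γ ^ m ∧
    (∀ a, 2 * a < m →
      β a = γ - γ⁻¹ + (γ⁻¹ - ((u ((m + 1) / 2))⁻¹) ^ 2 * γ) * γ ^ (2 * (a : ℤ) - m + 1)) := by
  obtain ⟨n, hn⟩ := hmodd
  rw [show (m + 1) / 2 = n + 1 by omega]
  have hrefl : ∀ a ≤ m, u a * u (m - a) = 1 := fun a ha => by
    rw [hu, hu]
    exact mul_mul_mul_sub_eq_one hvw ha
  have hx : u (n + 1) ≠ 0 := left_ne_zero_of_mul_eq_one (hrefl (n + 1) (by omega))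
  have hupper := Constraint.upper_half_eq hγ hn h1
  have hlower := Constraint.lower_half_eq hrefl hupper
  have hC : C = u (n + 1) * γ ^ m := by
    rw [← h1 m (by omega) le_rfl, ← Constraint.lhs, Constraint.lhs_self,
      hupper m (by omega) le_rfl,
      show 2 * (m : ℤ) - m - 1 = m - 1 by ring, zpow_sub_one₀ hγ, zpow_natCast]
    field_simp
  refine ⟨hx, hupper, hlower, hC, fun a ha => ?_⟩
  have h := h2 a ha
  rw [Constraint.lhs_erase γ u m ha,
    Constraint.lhs_eq_of_le_mid hγ hn (h1 (n + 1) (by omega) (by omega)) hlower a (by omega),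
    hupper (m - a) (by omega) (Nat.sub_le m a),
    show 2 * ((m - a : ℕ) : ℤ) - m - 1 = -(2 * (a : ℤ) - m + 1) by omega, zpow_neg] at h
  have hg : γ ^ (2 * (a : ℤ) - m + 1) ≠ 0 := zpow_ne_zero _ hγ
  field_simp at h ⊢
  linear_combination h

/-- Odd case of the constraint lemma for the fusion/braiding matrices.
Here `x := u_{(m+1)/2}` and the conditions `m/2 < a` and `a < m/2`
(real division, `m` odd) are expressed as `m < 2a` and `2a < m`. -/
theorem stmt10 {K : Type*} [Field K] (m : ℕ) (hm : 1 ≤ m) (hmodd : Odd m)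
    (γ : K) (hγ : γ ≠ 0) (hγ2 : γ ^ 2 ≠ 1)
    (v w u : ℕ → K)
    (hvw : ∀ a ≤ m, w a * v (m - a) = 1)
    (hu : ∀ a, u a = v a * w a)
    (C : K) (β : ℕ → K)
    (h1 : ∀ a, m < 2 * a → a ≤ m →
      γ * u a + (γ - γ⁻¹) * ∑ e ∈ Finset.range (m - a), u (m - e) = C)
    (h2 : ∀ a, 2 * a < m →
      γ * u a + (γ - γ⁻¹) * ∑ e ∈ (Finset.range (m - a)).erase a, u (m - e)
        + β a * u (m - a) = C) :
    u ((m + 1) / 2) ≠ 0 ∧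
    (∀ a, m < 2 * a → a ≤ m → u a = u ((m + 1) / 2) * γ ^ (2 * (a : ℤ) - m - 1)) ∧
    (∀ a, 2 * a < m → u a = (u ((m + 1) / 2))⁻¹ * γ ^ (2 * (a : ℤ) - m + 1)) ∧
    C = u ((m + 1) / 2) * γ ^ m ∧
    (∀ a, 2 * a < m →
      β a = γ - γ⁻¹ + (γ⁻¹ - ((u ((m + 1) / 2))⁻¹) ^ 2 * γ) * γ ^ (2 * (a : ℤ) - m + 1)) :=
  stmt10_general m hmodd γ hγ v w u hvw hu C β h1 h2
end

section
/- Let N be the (2n+1)×(2n+1) matrix over K defined by N_{b,a} = B^{(2n−b) b}_{a (2n−a)} for a, b ∈ {0, ..., 2n}, i.e. the matrix of the braiding B on its invariant subspace with basis {e_{(a, 2n−a)} : 0 ≤ a ≤ 2n}. Then Tr N = n·(u⁻² − u²) + u^{4n} and det N = (−1)^n · u^{4n}. (In the variable q = u⁴ this reads Tr = n(q^{−1/2} − q^{1/2}) + q^n and det = (−1)^n q^n.) -/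
noncomputable section

/-- The coefficient field `K = ℚ(u)`, the field of rational functions in `u`
over `ℚ` (`u` plays the role of `q^{1/4}`, `q = u⁴`). -/
abbrev FK : Type := RatFunc ℚ

/-- The variable `u` of `K = ℚ(u)`. -/
def U : FK := RatFunc.X

/-- The fusion matrix `M` of the fundamental `(2n+1)`-dimensional representation
of `B_n`: `M_{a,b} = 0` if `b ≠ 2n - a`, and `M_{a,2n-a} = u^{2(n-a)-1}` for
`a < n`, `M_{n,n} = 1`, `M_{a,2n-a} = u^{2(n-a)+1}` for `a > n`. -/
def MB (n a b : ℕ) : FK :=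
  if a + b = 2 * n then
    if a < n then U ^ (2 * ((n : ℤ) - a) - 1)
    else if a = n then 1
    else U ^ (2 * ((n : ℤ) - a) + 1)
  else 0

/-- The leading coefficients `c_a` of the braiding on the `a + c = 2n` block:
`c_n = 1` and `c_a = u²` for `a ≠ n`. -/
def cB (n a : ℕ) : FK := if a = n then 1 else U ^ (2 : ℤ)

/-- The wall-crossing coefficients `β_a^b` (`a < b`) of the braiding matrix
of `B_n`. -/
def betaB (n a b : ℕ) : FK :=
  if 0 < ((a : ℤ) - n) * ((b : ℤ) - n) then
    (U ^ (2 : ℤ) - U ^ (-2 : ℤ)) * U ^ (2 * ((b : ℤ) - a))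
  else if ((a : ℤ) - n) * ((b : ℤ) - n) = 0 then
    (U ^ (2 : ℤ) - U ^ (-2 : ℤ)) * U ^ (2 * ((b : ℤ) - a) - 1)
  else
    (U ^ (2 : ℤ) - U ^ (-2 : ℤ)) * U ^ (2 * ((b : ℤ) - a) - 2) +
      (if a + b = 2 * n then U ^ (-2 : ℤ) - U ^ (2 : ℤ) else 0)

/-- Coefficients of the braiding matrix of `B_n`:
`BB n b d a c = B^{bd}_{ac}`, the coefficient of `e_{(b,d)}` in `B e_{(a,c)}`.
For `a + c ≠ 2n`: `B e_{(a,c)} = u⁻² e_{(a,c)}` if `a = c`,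
`B e_{(a,c)} = e_{(c,a)}` if `a > c`, and
`B e_{(a,c)} = e_{(c,a)} + (u⁻² - u²) e_{(a,c)}` if `a < c`.
For `a + c = 2n`: `B e_{(a,2n-a)} = c_a e_{(2n-a,a)} + Σ_{b=a+1}^{2n} β_a^b e_{(2n-b,b)}`. -/
def BB (n b d a c : ℕ) : FK :=
  if a + c = 2 * n then
    if b + d = 2 * n then
      if d = a then cB n a else if a < d then betaB n a d else 0
    else 0
  else if a = c then (if b = a ∧ d = c then U ^ (-2 : ℤ) else 0)
  else if c < a then (if b = c ∧ d = a then 1 else 0)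
  else (if b = c ∧ d = a then (1 : FK) else 0) +
    (if b = a ∧ d = c then U ^ (-2 : ℤ) - U ^ (2 : ℤ) else 0)

/-- The braiding matrix `B` of `B_n` as a matrix indexed by pairs `(a, c)`,
with `BmatB n (b, d) (a, c) = B^{bd}_{ac}`. -/
def BmatB (n : ℕ) :
    Matrix (Fin (2 * n + 1) × Fin (2 * n + 1)) (Fin (2 * n + 1) × Fin (2 * n + 1)) FK :=
  Matrix.of fun p q => BB n p.1 p.2 q.1 q.2

/-- The matrix of the braiding `B` of `B_n` on its invariant subspace with
basis `{e_{(a, 2n-a)} : 0 ≤ a ≤ 2n}`. -/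
def NB (n : ℕ) : Matrix (Fin (2 * n + 1)) (Fin (2 * n + 1)) FK :=
  Matrix.of fun b a => BB n b (2 * n - (b : ℕ)) a (2 * n - (a : ℕ))

/-! `N_{b,a}` vanishes when `a + b > 2n`, so `N` is triangular with respect to the
antidiagonal, whose entries are the `c_a`. Hence `det N` is `∏ c_a = u^{4n}` times the sign
`(-1)^n` of the reversal of `{0, …, 2n}`. On the diagonal only `a ≤ n` survives: `N_{n,n} = 1`
and, for `a < n`, `β_a^{2n-a} = (u^{4(n-a)} - u^{4(n-a-1)}) + (u⁻² - u²)`, which telescopes. -/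

open Finset Equiv Equiv.Perm

theorem Fin.revPerm_succ_eq (m : ℕ) :
    (Fin.revPerm : Perm (Fin (m + 1))) = decomposeFin.symm (0, Fin.revPerm) * finRotate (m + 1) := by
  ext i : 1
  induction i using Fin.lastCases with
  | last => simp
  | cast j => simp [Fin.rev_castSucc]

theorem Fin.sign_revPerm (m : ℕ) : sign (Fin.revPerm : Perm (Fin m)) = (-1) ^ m.choose 2 := by
  induction m with
  | zero => rfl
  | succ m ih =>
    rw [Fin.revPerm_succ_eq, Perm.sign_mul, decomposeFin.symm_sign, ih, sign_finRotate,
      Nat.choose_succ_succ', Nat.choose_one_right, pow_add]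
    simp [mul_comm]

theorem Fin.sign_revPerm_two_mul_add_one (n : ℕ) :
    sign (Fin.revPerm : Perm (Fin (2 * n + 1))) = (-1) ^ n := by
  have hchoose : (2 * n + 1).choose 2 = 2 * (n * n) + n := by
    rw [Nat.choose_two_right, Nat.add_sub_cancel,
      show (2 * n + 1) * (2 * n) = 2 * (2 * (n * n) + n) by ring, Nat.mul_div_cancel_left _ two_pos]
  rw [Fin.sign_revPerm, hchoose, pow_add, pow_mul, neg_one_sq, one_pow, one_mul]

lemma U_ne_zero : U ≠ 0 := RatFunc.X_ne_zero

section Antidiagonal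

variable {n a b : ℕ}

lemma BB_antidiag (ha : a ≤ 2 * n) (hb : b ≤ 2 * n) :
    BB n b (2 * n - b) a (2 * n - a) =
      if 2 * n - b = a then cB n a else if a < 2 * n - b then betaB n a (2 * n - b) else 0 := by
  rw [BB, if_pos (by omega), if_pos (by omega)]

lemma BB_antidiag_eq_zero_of_lt (ha : a ≤ 2 * n) (hb : b ≤ 2 * n) (h : 2 * n - b < a) :
    BB n b (2 * n - b) a (2 * n - a) = 0 := by
  rw [BB_antidiag ha hb, if_neg (by omega), if_neg (by omega)]

lemma BB_antidiag_self_of_lt (h : a < n) :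
    BB n a (2 * n - a) a (2 * n - a) =
      U ^ (4 * ((n : ℤ) - a)) - U ^ (4 * ((n : ℤ) - (a + 1 : ℕ))) + (U ^ (-2 : ℤ) - U ^ (2 : ℤ)) := by
  have hcast : ((2 * n - a : ℕ) : ℤ) = 2 * n - a := by omega
  have hneg : ((a : ℤ) - n) * ((2 * n - a : ℕ) - n) < 0 := by
    rw [hcast]; nlinarith
  rw [BB_antidiag (by omega) (by omega), if_neg (by omega), if_pos (by omega), betaB,
    if_neg hneg.not_gt, if_neg hneg.ne, if_pos (by omega), sub_mul, ← zpow_add₀ U_ne_zero,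
    ← zpow_add₀ U_ne_zero, hcast]
  push_cast
  ring_nf

lemma BB_antidiag_self_mid : BB n n (2 * n - n) n (2 * n - n) = 1 := by
  rw [BB_antidiag (by omega) (by omega), if_pos (by omega), cB, if_pos rfl]

end Antidiagonal

theorem trace_NB (n : ℕ) :
    (NB n).trace = (n : FK) * (U ^ (-2 : ℤ) - U ^ (2 : ℤ)) + U ^ (4 * (n : ℤ)) := by
  set g : ℕ → FK := fun v => BB n v (2 * n - v) v (2 * n - v)
  set f : ℕ → FK := fun v => U ^ (4 * ((n : ℤ) - v))
  calc (NB n).trace = ∑ v ∈ range (n + 1 + n), g v := by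
        rw [show n + 1 + n = 2 * n + 1 by ring]
        exact Fin.sum_univ_eq_sum_range g _
    _ = ∑ v ∈ range n, (f v - f (v + 1) + (U ^ (-2 : ℤ) - U ^ (2 : ℤ))) + 1 := by
        have htail : ∑ v ∈ range n, g (n + 1 + v) = 0 := sum_eq_zero fun v hv => by
          have := mem_range.mp hv
          exact BB_antidiag_eq_zero_of_lt (by omega) (by omega) (by omega)
        rw [sum_range_add, htail, add_zero, sum_range_succ, show g n = 1 from BB_antidiag_self_mid]
        exact congrArg (· + 1) (sum_congr rfl fun v hv => BB_antidiag_self_of_lt (mem_range.mp hv))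
    _ = _ := by
        rw [sum_add_distrib, sum_range_sub', sum_const, card_range, nsmul_eq_mul]
        simp only [f, Nat.cast_zero, sub_zero, sub_self, mul_zero, zpow_zero]
        ring

lemma prod_cB (n : ℕ) : ∏ a : Fin (2 * n + 1), cB n a = U ^ (4 * (n : ℤ)) := by
  have hn : n ∈ range (2 * n + 1) := mem_range.mpr (by omega)
  rw [Fin.prod_univ_eq_prod_range (cB n)]
  unfold cB
  rw [Finset.prod_ite, prod_const_one, one_mul, prod_const,
    filter_ne', card_erase_of_mem hn, card_range, ← zpow_natCast, ← zpow_mul]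
  push_cast
  ring_nf

theorem det_NB (n : ℕ) : (NB n).det = (-1) ^ n * U ^ (4 * (n : ℤ)) := by
  have hrev : ∀ a : Fin (2 * n + 1), ((Fin.rev a : Fin (2 * n + 1)) : ℕ) = 2 * n - a := by
    intro a; rw [Fin.val_rev]; omega
  have htri : ((NB n).submatrix id Fin.revPerm).IsUpperTriangular := by
    intro i j (hij : j < i)
    have := Fin.lt_def.mp hij
    show NB n i (Fin.rev j) = 0
    exact BB_antidiag_eq_zero_of_lt (by omega) (by omega) (by rw [hrev]; omega)
  have hdiag : ∀ i : Fin (2 * n + 1), NB n i (Fin.rev i) = cB n (Fin.rev i) := by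
    intro i
    rw [NB, Matrix.of_apply, BB_antidiag (by omega) (by omega), hrev, if_pos (by omega)]
  have hdet := Matrix.det_permute' Fin.revPerm (NB n)
  rw [Matrix.det_of_isUpperTriangular htri, Fin.sign_revPerm_two_mul_add_one] at hdet
  simp only [Matrix.submatrix_apply, id, Fin.revPerm_apply, hdiag] at hdet
  rw [Fintype.prod_equiv Fin.revPerm (fun i => cB n (Fin.rev i)) (fun i => cB n i)
    (fun _ => rfl), prod_cB] at hdet
  push_cast at hdet
  rw [hdet, ← mul_assoc, ← mul_pow, neg_one_mul, neg_neg, one_pow, one_mul]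

theorem stmt11_general (n : ℕ) :
    (NB n).trace = (n : FK) * (U ^ (-2 : ℤ) - U ^ (2 : ℤ)) + U ^ (4 * (n : ℤ)) ∧
    (NB n).det = (-1) ^ n * U ^ (4 * (n : ℤ)) :=
  ⟨trace_NB n, det_NB n⟩

/-- Trace and determinant of the braiding matrix of `B_n` on the invariant
subspace with basis `{e_{(a,2n-a)}}`:
`Tr N = n(u⁻² - u²) + u^{4n}` and `det N = (-1)^n u^{4n}`
(in `q = u⁴`: `Tr = n(q^{-1/2} - q^{1/2}) + q^n`, `det = (-1)^n q^n`). -/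
theorem stmt11 (n : ℕ) (hn : 1 ≤ n) :
    (NB n).trace = (n : FK) * (U ^ (-2 : ℤ) - U ^ (2 : ℤ)) + U ^ (4 * (n : ℤ)) ∧
    (NB n).det = (-1) ^ n * U ^ (4 * (n : ℤ)) :=
  stmt11_general n
end
end

section
/- Let N be the 2n×2n matrix over K defined by N_{k,j} = B^{(2n−1−k) k}_{j (2n−1−j)} for j, k ∈ {0, ..., 2n−1} (the matrix of B on its invariant subspace with basis {e_{(j, 2n−1−j)}}). Then the characteristic polynomial of N equals (X − u⁻¹)^{n−1} · (X + u)^n · (X − u^{2n−1}); equivalently, the eigenvalues of the braiding matrix B on this subspace are q^{−1/2} = u⁻¹ with multiplicity n−1, −q^{1/2} = −u with multiplicity n, and q^{(2n−1)/2} = u^{2n−1} with multiplicity 1. -/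
/-!
Write `e_k` for the standard basis and `p_k = e_k - u e_{k+1}`. Column by column one finds the
Hecke-type relations `N p_k = -p_{2n-2-k} + [k < n-1] (u⁻¹ - u) p_k` for `k ≠ n-1`,
`N (e_n - e_{n-1}) = -u (e_n - e_{n-1})` and `N e_{2n-1} = u e_0`. Hence
`s_j = p_j + u⁻¹ p_{2n-2-j}` (`j < n-1`) is a `-u`-eigenvector, and in the basis
`s_0, …, s_{n-2}, e_n - e_{n-1}, p_n, …, p_{2n-2}, e_{2n-1}`, which is triangular with respect
to the standard one, `N` becomes upper triangular with diagonal `-u` (`n` times), `u⁻¹`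
(`n-1` times) and one last entry. That entry is `y (N e_{2n-1}) = u y_0 = u^{2n-1}`, where `y`
is the linear form with `y(e_{2n-1}) = 1` vanishing on the other basis vectors:
`y_i = u^{2n-2-i}` for `i < n` and `y_i = u^{2n-1-i}` for `i ≥ n`.
-/

noncomputable section

/-- The fusion matrix `M` of the fundamental `2n`-dimensional representation of
`D_n` (weights indexed by their order `0, …, 2n-1`): `M_{j,k} = 0` if
`k ≠ 2n-1-j`, `M_{j,2n-1-j} = u^{n-1-j}` for `j ≤ n-1`, and
`M_{j,2n-1-j} = u^{n-j}` for `j ≥ n`. -/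
def MD (n j k : ℕ) : FK :=
  if j + k + 1 = 2 * n then
    if j < n then U ^ ((n : ℤ) - 1 - j) else U ^ ((n : ℤ) - j)
  else 0

/-- The wall-crossing coefficients `β_j^k` (`j < k`) of the braiding matrix
of `D_n`: `(u - u⁻¹)u^{k-j}` if `j, k` are both `≤ n-1` or both `≥ n`, and
`(u - u⁻¹)u^{k-j-1} + δ_{j,2n-1-k}(u⁻¹ - u)` otherwise. -/
def betaD (n j k : ℕ) : FK :=
  if (j < n ∧ k < n) ∨ (n ≤ j ∧ n ≤ k) then
    (U - U⁻¹) * U ^ ((k : ℤ) - j)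
  else
    (U - U⁻¹) * U ^ ((k : ℤ) - j - 1) +
      (if j + k + 1 = 2 * n then U⁻¹ - U else 0)

/-- Coefficients of the braiding matrix of `D_n`:
`BD n b d j k = B^{bd}_{jk}`, the coefficient of `e_{(b,d)}` in `B e_{(j,k)}`.
`B e_{(j,j)} = u⁻¹ e_{(j,j)}`; for `j ≠ k` with `j + k ≠ 2n-1`,
`B e_{(j,k)} = e_{(k,j)}` if `j > k` and
`B e_{(j,k)} = e_{(k,j)} + (u⁻¹ - u) e_{(j,k)}` if `j < k`; for `j + k = 2n-1`,
`B e_{(j,2n-1-j)} = u e_{(2n-1-j,j)} + Σ_{k=j+1}^{2n-1} β_j^k e_{(2n-1-k,k)}`. -/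
def BD (n b d j k : ℕ) : FK :=
  if j + k + 1 = 2 * n then
    if b + d + 1 = 2 * n then
      if d = j then U else if j < d then betaD n j d else 0
    else 0
  else if j = k then (if b = j ∧ d = k then U⁻¹ else 0)
  else if k < j then (if b = k ∧ d = j then 1 else 0)
  else (if b = k ∧ d = j then (1 : FK) else 0) +
    (if b = j ∧ d = k then U⁻¹ - U else 0)

/-- The braiding matrix `B` of `D_n` as a matrix indexed by pairs `(j, k)`,
with `BmatD n (b, d) (j, k) = B^{bd}_{jk}`. -/
def BmatD (n : ℕ) :
    Matrix (Fin (2 * n) × Fin (2 * n)) (Fin (2 * n) × Fin (2 * n)) FK :=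
  Matrix.of fun p q => BD n p.1 p.2 q.1 q.2

/-- The matrix of the braiding `B` of `D_n` on its invariant subspace with
basis `{e_{(j, 2n-1-j)} : 0 ≤ j ≤ 2n-1}`. -/
def ND (n : ℕ) : Matrix (Fin (2 * n)) (Fin (2 * n)) FK :=
  Matrix.of fun k j => BD n k (2 * n - 1 - (k : ℕ)) j (2 * n - 1 - (j : ℕ))


open Polynomial Matrix

section Conjugation

variable {ι R : Type*} [Fintype ι] [DecidableEq ι] [CommRing R] {N P : Matrix ι ι R}

lemma Matrix.charpoly_nonsing_inv_mul_mul (hP : IsUnit P.det) :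
    (P⁻¹ * N * P).charpoly = N.charpoly :=
  charpoly_units_conj' (P.nonsingInvUnit hP) N

lemma Matrix.nonsing_inv_mul_mul_mulVec {v t : ι → R} (hP : IsUnit P.det)
    (h : N *ᵥ (P *ᵥ v) = P *ᵥ t) : (P⁻¹ * N * P) *ᵥ v = t := by
  rw [← mulVec_mulVec, ← mulVec_mulVec, h, mulVec_mulVec, nonsing_inv_mul _ hP, one_mulVec]

lemma Matrix.dotProduct_nonsing_inv_mul_mul_mulVec {x y v : ι → R} (hP : IsUnit P.det)
    (hy : y ᵥ* P = x) : x ⬝ᵥ ((P⁻¹ * N * P) *ᵥ v) = y ⬝ᵥ (N *ᵥ (P *ᵥ v)) := by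
  rw [← hy, dotProduct_mulVec, vecMul_vecMul, ← mul_assoc, ← mul_assoc, mul_nonsing_inv _ hP,
    one_mul, ← vecMul_vecMul, ← dotProduct_mulVec, ← dotProduct_mulVec]

end Conjugation

section UnitVectors

variable {R : Type*} [NonAssocSemiring R] {m : ℕ}

/-- The standard basis vector `e_k`, indexed by a natural number (and zero when `k ≥ m`) so that
indices such as `2n-2-k` need no `Fin` arithmetic. -/
def natSingle (k : ℕ) : Fin m → R := fun i => if (i : ℕ) = k then 1 else 0

lemma natSingle_eq_single {k : ℕ} (hk : k < m) :
    (natSingle k : Fin m → R) = Pi.single ⟨k, hk⟩ 1 := by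
  ext i
  simp [natSingle, Pi.single_apply, Fin.ext_iff]

lemma mulVec_natSingle {ι : Type*} (M : Matrix ι (Fin m) R) {k : ℕ} (hk : k < m) :
    M *ᵥ natSingle k = fun i => M i ⟨k, hk⟩ := by
  ext i
  simp [natSingle_eq_single hk]

lemma dotProduct_natSingle (v : Fin m → R) {k : ℕ} (hk : k < m) :
    v ⬝ᵥ natSingle k = v ⟨k, hk⟩ := by
  simp [natSingle_eq_single hk]

end UnitVectors

namespace BraidingD

lemma U_ne_zero : U ≠ 0 := RatFunc.X_ne_zero

variable {n : ℕ}

lemma ND_apply_of_add_eq {i k : Fin (2 * n)} (h : (i : ℕ) + k = 2 * n - 1) : ND n i k = U := by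
  simp only [ND, BD, Matrix.of_apply]
  rw [if_pos (by omega), if_pos (by omega), if_pos (by omega)]

lemma ND_apply_of_add_gt {i k : Fin (2 * n)} (h : 2 * n - 1 < (i : ℕ) + k) : ND n i k = 0 := by
  simp only [ND, BD, Matrix.of_apply]
  rw [if_pos (by omega), if_pos (by omega), if_neg (by omega), if_neg (by omega)]

lemma ND_apply_of_lt_of_lt {i k : Fin (2 * n)} (hi : (i : ℕ) < n) (hk : (k : ℕ) < n) :
    ND n i k =
      (U - U⁻¹) * U ^ (2 * n - 2 - i - k) + if (i : ℕ) = k then U⁻¹ - U else 0 := by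
  simp only [ND, BD, betaD, Matrix.of_apply]
  rw [if_pos (by omega), if_pos (by omega), if_neg (by omega), if_pos (by omega),
    if_neg (by omega)]
  have he : ((2 * n - 1 - i : ℕ) : ℤ) - k - 1 = ((2 * n - 2 - i - k : ℕ) : ℤ) := by omega
  have hc : (k : ℕ) + (2 * n - 1 - i) + 1 = 2 * n ↔ (i : ℕ) = k := by omega
  simp only [he, zpow_natCast, hc]

lemma ND_apply_of_add_lt {i k : Fin (2 * n)} (h : (i : ℕ) + k < 2 * n - 1)
    (hik : n ≤ (i : ℕ) ∨ n ≤ (k : ℕ)) :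
    ND n i k = (U - U⁻¹) * U ^ (2 * n - 1 - i - k) := by
  simp only [ND, BD, betaD, Matrix.of_apply]
  rw [if_pos (by omega), if_pos (by omega), if_neg (by omega), if_pos (by omega),
    if_pos (by omega)]
  have he : ((2 * n - 1 - i : ℕ) : ℤ) - k = ((2 * n - 1 - i - k : ℕ) : ℤ) := by omega
  rw [he, zpow_natCast]

def stepVec (n k : ℕ) : Fin (2 * n) → FK := natSingle k - U • natSingle (k + 1)

def midVec (n : ℕ) : Fin (2 * n) → FK := natSingle n - natSingle (n - 1)

def pairVec (n j : ℕ) : Fin (2 * n) → FK := stepVec n j + U⁻¹ • stepVec n (2 * n - 2 - j)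

lemma ND_mulVec_stepVec {k : ℕ} (hk : k + 1 < 2 * n) (hkn : k ≠ n - 1) :
    ND n *ᵥ stepVec n k =
      -stepVec n (2 * n - 2 - k) + if k < n - 1 then (U⁻¹ - U) • stepVec n k else 0 := by
  ext i
  simp only [stepVec, mulVec_sub, mulVec_smul, mulVec_natSingle _ hk,
    mulVec_natSingle _ (by omega : k < 2 * n)]
  simp only [natSingle, Pi.add_apply, Pi.sub_apply, Pi.smul_apply, Pi.neg_apply, ite_apply,
    Pi.zero_apply, smul_eq_mul]
  have hU := U_ne_zero
  have hi := i.isLt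
  obtain h | h | h | h : (i : ℕ) + k < 2 * n - 2 ∨ (i : ℕ) + k = 2 * n - 2 ∨
      (i : ℕ) + k = 2 * n - 1 ∨ 2 * n - 1 < (i : ℕ) + k := by omega
  · by_cases hik : (i : ℕ) < n ∧ k < n - 1
    · rw [ND_apply_of_lt_of_lt hik.1 (by simp; omega),
        ND_apply_of_lt_of_lt hik.1 (by simp; omega)]
      simp only
      rw [show 2 * n - 2 - i - k = 2 * n - 2 - i - (k + 1) + 1 by omega, pow_succ]
      split_ifs <;> first | omega | (field_simp; ring)
    · rw [ND_apply_of_add_lt (by simp; omega) (by simp; omega),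
        ND_apply_of_add_lt (by simp; omega) (by simp; omega)]
      simp only
      rw [show 2 * n - 1 - i - k = 2 * n - 1 - i - (k + 1) + 1 by omega, pow_succ]
      split_ifs <;> first | omega | (field_simp; ring)
  · rw [ND_apply_of_add_lt (by simp; omega) (by simp; omega),
      ND_apply_of_add_eq (by simp; omega)]
    simp only
    rw [show 2 * n - 1 - i - k = 1 by omega]
    split_ifs <;> first | omega | (field_simp; ring)
  · rw [ND_apply_of_add_eq (by simp; omega), ND_apply_of_add_gt (by simp; omega)]
    split_ifs <;> first | omega | ring
  · rw [ND_apply_of_add_gt (by simp; omega), ND_apply_of_add_gt (by simp; omega)]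
    split_ifs <;> first | omega | ring

lemma ND_mulVec_midVec (hn : 0 < n) : ND n *ᵥ midVec n = -U • midVec n := by
  ext i
  simp only [midVec, mulVec_sub, mulVec_natSingle _ (by omega : n < 2 * n),
    mulVec_natSingle _ (by omega : n - 1 < 2 * n)]
  simp only [natSingle, Pi.sub_apply, Pi.smul_apply, smul_eq_mul]
  have hi := i.isLt
  obtain h | h | h | h :
      (i : ℕ) < n - 1 ∨ (i : ℕ) = n - 1 ∨ (i : ℕ) = n ∨ n < (i : ℕ) := by omega
  · rw [ND_apply_of_add_lt (by simp; omega) (by simp),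
      ND_apply_of_lt_of_lt (by omega) (by simp; omega)]
    simp only
    rw [show 2 * n - 1 - i - n = 2 * n - 2 - i - (n - 1) by omega]
    split_ifs <;> first | omega | ring
  · rw [ND_apply_of_add_eq (by simp; omega), ND_apply_of_lt_of_lt (by omega) (by simp; omega)]
    simp only
    rw [show 2 * n - 2 - i - (n - 1) = 0 by omega]
    split_ifs <;> first | omega | ring
  · rw [ND_apply_of_add_gt (by simp; omega), ND_apply_of_add_eq (by simp; omega)]
    split_ifs <;> first | omega | ring
  · rw [ND_apply_of_add_gt (by simp; omega), ND_apply_of_add_gt (by simp; omega)]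
    split_ifs <;> first | omega | ring

lemma ND_mulVec_natSingle_last (hn : 0 < n) :
    ND n *ᵥ natSingle (2 * n - 1) = U • natSingle 0 := by
  ext i
  rw [mulVec_natSingle _ (by omega)]
  simp only [natSingle, Pi.smul_apply, smul_eq_mul]
  split_ifs with h
  · rw [ND_apply_of_add_eq (by simp; omega), mul_one]
  · rw [ND_apply_of_add_gt (by simp; omega), mul_zero]

lemma ND_mulVec_pairVec {j : ℕ} (hj : j < n - 1) :
    ND n *ᵥ pairVec n j = -U • pairVec n j := by
  have hU := U_ne_zero
  have hp := ND_mulVec_stepVec (n := n) (k := j) (by omega) (by omega)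
  have hq := ND_mulVec_stepVec (n := n) (k := 2 * n - 2 - j) (by omega) (by omega)
  rw [if_pos hj] at hp
  rw [if_neg (by omega), show 2 * n - 2 - (2 * n - 2 - j) = j by omega, add_zero] at hq
  rw [pairVec, mulVec_add, mulVec_smul, hp, hq]
  ext i
  simp only [Pi.add_apply, Pi.smul_apply, Pi.neg_apply, smul_eq_mul]
  field_simp
  ring

lemma ND_mulVec_stepVec_of_le {j : ℕ} (hnj : n ≤ j) (hj : j < 2 * n - 1) :
    ND n *ᵥ stepVec n j = U⁻¹ • stepVec n j - pairVec n (2 * n - 2 - j) := by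
  have hU := U_ne_zero
  rw [ND_mulVec_stepVec (by omega) (by omega), if_neg (by omega), add_zero, pairVec,
    show 2 * n - 2 - (2 * n - 2 - j) = j by omega]
  ext i
  simp only [Pi.add_apply, Pi.sub_apply, Pi.smul_apply, Pi.neg_apply, smul_eq_mul]
  field_simp
  ring

def flagVec (n j : ℕ) : Fin (2 * n) → FK :=
  if j < n - 1 then pairVec n j
  else if j = n - 1 then midVec n
  else if j < 2 * n - 1 then stepVec n j
  else natSingle (2 * n - 1)

def flagMatrix (n : ℕ) : Matrix (Fin (2 * n)) (Fin (2 * n)) FK :=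
  Matrix.of fun i j => flagVec n j i

lemma flagMatrix_mulVec_natSingle {j : ℕ} (hj : j < 2 * n) :
    flagMatrix n *ᵥ natSingle j = flagVec n j := by
  rw [mulVec_natSingle _ hj]
  rfl

lemma flagVec_apply_of_lt {j : ℕ} (hj : j < 2 * n) {i : Fin (2 * n)} (h : (i : ℕ) < j) :
    flagVec n j i = 0 := by
  simp only [flagVec, pairVec, stepVec, midVec]
  split_ifs <;> simp only [natSingle, Pi.add_apply, Pi.sub_apply, Pi.smul_apply, smul_eq_mul] <;>
    split_ifs <;> first | omega | ring

lemma flagVec_apply_self {j : ℕ} (hj : j < 2 * n) :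
    flagVec n j ⟨j, hj⟩ = if j = n - 1 then -1 else 1 := by
  simp only [flagVec, pairVec, stepVec, midVec]
  split_ifs <;> simp only [natSingle, Pi.add_apply, Pi.sub_apply, Pi.smul_apply, smul_eq_mul] <;>
    split_ifs <;> first | omega | ring

lemma isUnit_det_flagMatrix : IsUnit (flagMatrix n).det := by
  have hlower : (flagMatrix n).IsLowerTriangular := fun i j hij => flagVec_apply_of_lt j.isLt hij
  rw [det_of_isLowerTriangular _ hlower, isUnit_iff_ne_zero, Finset.prod_ne_zero_iff]
  intro j _
  simp only [flagMatrix, of_apply, flagVec_apply_self j.isLt]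
  split_ifs <;> norm_num

lemma flagVec_last (hn : 0 < n) : flagVec n (2 * n - 1) = natSingle (2 * n - 1) := by
  simp only [flagVec]
  rw [if_neg (by omega), if_neg (by omega), if_neg (by omega)]

def triMatrixCol (n j : ℕ) : Fin (2 * n) → FK :=
  if j < n then -U • natSingle j else U⁻¹ • natSingle j - natSingle (2 * n - 2 - j)

lemma ND_mulVec_flagVec {j : ℕ} (hj : j < 2 * n - 1) :
    ND n *ᵥ flagVec n j = flagMatrix n *ᵥ triMatrixCol n j := by
  by_cases hjn : j < n
  · rw [triMatrixCol, if_pos hjn, mulVec_smul, flagMatrix_mulVec_natSingle (by omega)]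
    by_cases hj' : j < n - 1
    · simp only [flagVec, if_pos hj', ND_mulVec_pairVec hj']
    · simp only [flagVec, if_neg hj', if_pos (show j = n - 1 by omega),
        ND_mulVec_midVec (Nat.zero_lt_of_lt hjn)]
  · rw [triMatrixCol, if_neg hjn, mulVec_sub, mulVec_smul, flagMatrix_mulVec_natSingle (by omega),
      flagMatrix_mulVec_natSingle (by omega)]
    simp only [flagVec, if_pos (show 2 * n - 2 - j < n - 1 by omega),
      if_neg (show ¬j < n - 1 by omega), if_neg (show j ≠ n - 1 by omega), if_pos hj,
      ND_mulVec_stepVec_of_le (not_lt.mp hjn) hj]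

def lastDualVec (n : ℕ) : Fin (2 * n) → FK :=
  fun i => if (i : ℕ) < n then U ^ (2 * n - 2 - i) else U ^ (2 * n - 1 - i)

lemma lastDualVec_dotProduct_stepVec {k : ℕ} (hk : k + 1 < 2 * n) (hkn : k ≠ n - 1) :
    lastDualVec n ⬝ᵥ stepVec n k = 0 := by
  rw [stepVec, dotProduct_sub, dotProduct_smul, dotProduct_natSingle _ (by omega),
    dotProduct_natSingle _ hk]
  simp only [lastDualVec, smul_eq_mul]
  split_ifs
  · rw [show 2 * n - 2 - k = 2 * n - 2 - (k + 1) + 1 by omega, pow_succ]; ring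
  · omega
  · omega
  · rw [show 2 * n - 1 - k = 2 * n - 1 - (k + 1) + 1 by omega, pow_succ]; ring

lemma lastDualVec_dotProduct_midVec (hn : 0 < n) : lastDualVec n ⬝ᵥ midVec n = 0 := by
  rw [midVec, dotProduct_sub, dotProduct_natSingle _ (by omega), dotProduct_natSingle _ (by omega)]
  simp only [lastDualVec]
  rw [if_neg (by omega), if_pos (by omega), show 2 * n - 1 - n = 2 * n - 2 - (n - 1) by omega,
    sub_self]

lemma lastDualVec_vecMul_flagMatrix (hn : 0 < n) :
    lastDualVec n ᵥ* flagMatrix n = natSingle (2 * n - 1) := by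
  ext j
  have hj := j.isLt
  change lastDualVec n ⬝ᵥ flagVec n j = natSingle (2 * n - 1) j
  simp only [flagVec]
  split_ifs with h₁ h₂ h₃
  · rw [pairVec, dotProduct_add, dotProduct_smul,
      lastDualVec_dotProduct_stepVec (by omega) (by omega),
      lastDualVec_dotProduct_stepVec (by omega) (by omega), smul_zero, add_zero, natSingle,
      if_neg (by omega)]
  · rw [lastDualVec_dotProduct_midVec hn, natSingle, if_neg (by omega)]
  · rw [lastDualVec_dotProduct_stepVec (by omega) (by omega), natSingle, if_neg (by omega)]
  · rw [dotProduct_natSingle _ (by omega)]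
    simp only [lastDualVec, natSingle]
    rw [if_neg (by omega), if_pos (by omega), Nat.sub_self, pow_zero]

def triMatrix (n : ℕ) : Matrix (Fin (2 * n)) (Fin (2 * n)) FK :=
  (flagMatrix n)⁻¹ * ND n * flagMatrix n

lemma charpoly_triMatrix : (triMatrix n).charpoly = (ND n).charpoly :=
  charpoly_nonsing_inv_mul_mul isUnit_det_flagMatrix

lemma triMatrix_apply_of_lt {i j : Fin (2 * n)} (hj : (j : ℕ) < 2 * n - 1) :
    triMatrix n i j = triMatrixCol n j i := by
  have hcol : triMatrix n *ᵥ natSingle j = triMatrixCol n j :=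
    nonsing_inv_mul_mul_mulVec isUnit_det_flagMatrix
      (by rw [flagMatrix_mulVec_natSingle j.isLt]; exact ND_mulVec_flagVec hj)
  rw [← hcol, mulVec_natSingle _ j.isLt]

lemma triMatrix_apply_last (hn : 0 < n) :
    triMatrix n ⟨2 * n - 1, by omega⟩ ⟨2 * n - 1, by omega⟩ = U ^ (2 * n - 1) := by
  have h := dotProduct_nonsing_inv_mul_mul_mulVec (N := ND n) (v := natSingle (2 * n - 1))
    isUnit_det_flagMatrix (lastDualVec_vecMul_flagMatrix hn)
  rw [dotProduct_comm, dotProduct_natSingle _ (by omega), mulVec_natSingle _ (by omega),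
    flagMatrix_mulVec_natSingle (by omega), flagVec_last hn, ND_mulVec_natSingle_last hn,
    dotProduct_smul, dotProduct_natSingle _ (by omega)] at h
  refine h.trans ?_
  simp only [lastDualVec, smul_eq_mul]
  rw [if_pos hn, ← pow_succ', show 2 * n - 2 - 0 + 1 = 2 * n - 1 by omega]

lemma triMatrix_isUpperTriangular : (triMatrix n).IsUpperTriangular := by
  intro i j hij
  have hij : (j : ℕ) < i := hij
  rw [triMatrix_apply_of_lt (by omega)]
  simp only [triMatrixCol]
  split_ifs <;> simp only [Pi.smul_apply, Pi.sub_apply, smul_eq_mul, natSingle] <;>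
    split_ifs <;> first | omega | ring

def triMatrixDiag (n i : ℕ) : FK :=
  if i < n then -U else if i < 2 * n - 1 then U⁻¹ else U ^ (2 * n - 1)

lemma triMatrix_apply_self (hn : 0 < n) (i : Fin (2 * n)) :
    triMatrix n i i = triMatrixDiag n i := by
  by_cases hi : (i : ℕ) < 2 * n - 1
  · rw [triMatrix_apply_of_lt hi, triMatrixCol, triMatrixDiag]
    split_ifs <;> simp only [Pi.smul_apply, Pi.sub_apply, smul_eq_mul, natSingle] <;>
      split_ifs <;> first | omega | ring
  · have hi' : i = ⟨2 * n - 1, by omega⟩ := Fin.ext (by simp only; omega)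
    rw [hi', triMatrix_apply_last hn]
    simp only [triMatrixDiag]
    rw [if_neg (by omega), if_neg (by omega)]

lemma prod_X_sub_C_triMatrixDiag (hn : 0 < n) :
    ∏ i : Fin (2 * n), (X - C (triMatrixDiag n i)) =
      (X - C U⁻¹) ^ (n - 1) * (X + C U) ^ n * (X - C (U ^ (2 * (n : ℤ) - 1))) := by
  have hlow : ∀ i ∈ Finset.range n, X - C (triMatrixDiag n i) = X + C U := fun i hi => by
    rw [triMatrixDiag, if_pos (Finset.mem_range.mp hi), map_neg, sub_neg_eq_add]
  have hmid : ∀ i ∈ Finset.range (n - 1), X - C (triMatrixDiag n (n + i)) = X - C U⁻¹ :=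
      fun i hi => by
    have := Finset.mem_range.mp hi
    rw [triMatrixDiag, if_neg (by omega), if_pos (by omega)]
  have hlast : triMatrixDiag n (n + (n - 1)) = U ^ (2 * (n : ℤ) - 1) := by
    rw [triMatrixDiag, if_neg (by omega), if_neg (by omega), ← zpow_natCast]
    congr 1
    omega
  rw [Fin.prod_univ_eq_prod_range (fun i => X - C (triMatrixDiag n i)),
    show 2 * n = n + (n - 1) + 1 by omega, Finset.prod_range_succ, Finset.prod_range_add,
    Finset.prod_congr rfl hlow, Finset.prod_congr rfl hmid, hlast]
  simp only [Finset.prod_const, Finset.card_range]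
  ring

end BraidingD

/-- The characteristic polynomial of the braiding matrix of `D_n` on the
invariant subspace with basis `{e_{(j,2n-1-j)}}` is
`(X - u⁻¹)^{n-1} (X + u)^n (X - u^{2n-1})`: the eigenvalues are
`q^{-1/2} = u⁻¹` with multiplicity `n-1`, `-q^{1/2} = -u` with multiplicity `n`,
and `q^{(2n-1)/2} = u^{2n-1}` with multiplicity `1`. -/
theorem stmt15 (n : ℕ) (hn : 2 ≤ n) :
    (ND n).charpoly =
      (Polynomial.X - Polynomial.C U⁻¹) ^ (n - 1) *
        (Polynomial.X + Polynomial.C U) ^ n *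
        (Polynomial.X - Polynomial.C (U ^ (2 * (n : ℤ) - 1))) := by
  open BraidingD in
  rw [← charpoly_triMatrix, charpoly_of_isUpperTriangular _ triMatrix_isUpperTriangular]
  simp only [triMatrix_apply_self (by omega : 0 < n)]
  exact prod_X_sub_C_triMatrixDiag (by omega)

end
end
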